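/- arXiv:1002.1591 — 5 statements merged into one kernel-verified Lean document; each statement's English description precedes it below -/
import Mathlib

section
/- Suppose $\Psi$ is $C^2$ on $[0,1]$ with $\Psi(1) = \Psi'(1) = 1$, let $F(\eta) = \Psi(\eta^2) - \eta^2$ satisfy $F > 0$ on $(-1,1)$, let $\beta > 0$, and let $u \in \mathcal{M}$ be a minimizer of $\mathcal{E}(u) = \sum_j F(u_j) + \beta\sum_j(u_{j+1}-u_j)^2$ over $\mathcal{M}$. Then there is no index $j_0$ such that $u_{j_0-1} < 1$ and $u_j = 1$ for all $j \geq j_0$; consequently $u_j < 1$ for all $j \in \mathbb{Z}$ (and by oddness $u_j > -1$ for all $j$). -/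
open Filter
open scoped ENNReal

/-- the set `𝓜` of odd, nondecreasing profiles with values in `[-1,1]`. -/
def IsM (u : ℤ → ℝ) : Prop :=
  (∀ j, u (-j) = - u j) ∧ Monotone u ∧ ∀ j, u j ∈ Set.Icc (-1 : ℝ) 1

/-- the energy functional `𝓔(u) = ∑ F(u_j) + β ∑ (u_{j+1}-u_j)²` with values in `[0,∞]`. -/
noncomputable def energy (F : ℝ → ℝ) (β : ℝ) (u : ℤ → ℝ) : ℝ≥0∞ :=
  (∑' j : ℤ, ENNReal.ofReal (F (u j))) +
    ENNReal.ofReal β * ∑' j : ℤ, ENNReal.ofReal ((u (j + 1) - u j) ^ 2)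

/-! If a minimizer reached `1` first at a site `j0`, lower `u j0` to some `x < 1` and `u (-j0)`
to `-x`, which keeps the profile in `𝓜`. With `a = u (j0 - 1)` the energy changes by
`2 (F x - F 1) - 4 β (1 - x) (x - a)`. Since `Ψ' 1 = 1` forces `F' 1 = 0`, the first term is
`o(1 - x)` while the second is of exact order `1 - x`, so for `x` close to `1` the energy drops,
contradicting minimality. Hence `u` never reaches `1`, and by oddness never `-1`. -/

open Function Finset Topology

theorem Monotone.update_int {α : Type*} [Preorder α] {u : ℤ → α} (hu : Monotone u) {k : ℤ}
    {x : α} (hlo : u (k - 1) ≤ x) (hhi : x ≤ u (k + 1)) : Monotone (update u k x) := by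
  refine monotone_int_of_le_succ fun j => ?_
  rcases eq_or_ne (j + 1) k with rfl | hj₁
  · simpa [update_apply] using hlo
  rcases eq_or_ne j k with rfl | hj₂
  · simpa [update_apply] using hhi
  simpa [update_apply, hj₁, hj₂] using hu (Int.le_add_one le_rfl)

theorem Finset.sum_sub_sum_eq_of_eqOn_sdiff {ι M : Type*} [DecidableEq ι] [AddCommGroup M]
    {s t : Finset ι} {f g : ι → M} (hts : t ⊆ s) (hfg : ∀ i ∈ s \ t, f i = g i) :
    ∑ i ∈ s, f i - ∑ i ∈ s, g i = ∑ i ∈ t, f i - ∑ i ∈ t, g i := by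
  rw [← sum_sdiff hts, ← sum_sdiff hts (f := g), sum_congr rfl hfg]
  abel

theorem exists_terminal_plateau {u : ℤ → ℝ} (hmono : Monotone u) (hle : ∀ j, u j ≤ 1) {k i : ℤ}
    (hk : u k < 1) (hi : u i = 1) : ∃ j0, u (j0 - 1) < 1 ∧ ∀ j, j0 ≤ j → u j = 1 := by
  have hbdd : ∀ z, u z = 1 → k + 1 ≤ z := fun z hz => by
    by_contra! h
    linarith [hmono (show z ≤ k by omega)]
  obtain ⟨j0, hj0, hleast⟩ := Int.exists_least_of_bdd ⟨k + 1, hbdd⟩ ⟨i, hi⟩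
  refine ⟨j0, (hle _).lt_of_ne fun h => ?_, fun j hj => le_antisymm (hle j) (hj0 ▸ hmono hj)⟩
  linarith [hleast _ h]

namespace IsM

variable {u : ℤ → ℝ}

theorem map_zero (hu : IsM u) : u 0 = 0 := by
  linarith [hu.1 0, neg_zero (G := ℤ) ▸ hu.1 0]

theorem eq_neg_one_of_le {N : ℤ} (hu : IsM u) (htop : ∀ j, N ≤ j → u j = 1) {j : ℤ}
    (hj : j ≤ -N) : u j = -1 := by
  rw [← neg_neg j, hu.1, htop _ (by omega)]

theorem update_pair (hu : IsM u) {k : ℤ} (hk : 0 < k) {x : ℝ} (hlo : u (k - 1) ≤ x)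
    (hhi : x ≤ u (k + 1)) : IsM (update (update u k x) (-k) (-x)) := by
  obtain ⟨hodd, hmono, hIcc⟩ := hu
  refine ⟨fun j => ?_, ?_, fun j => ?_⟩
  · simp only [update_apply]
    split_ifs <;> first | omega | rfl | simp [hodd]
  · refine (hmono.update_int hlo hhi).update_int ?_ ?_
    · rw [update_of_ne (by omega), show -k - 1 = -(k + 1) by ring, hodd]
      exact neg_le_neg hhi
    · rw [update_of_ne (by omega), show -k + 1 = -(k - 1) by ring, hodd]
      exact neg_le_neg hlo
  · have hx : x ∈ Set.Icc (-1 : ℝ) 1 := ⟨(hIcc _).1.trans hlo, hhi.trans (hIcc _).2⟩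
    simp only [update_apply]
    split_ifs
    · exact ⟨by linarith [hx.2], by linarith [hx.1]⟩
    · exact hx
    · exact hIcc j

end IsM

noncomputable def windowEnergy (F : ℝ → ℝ) (β : ℝ) (N : ℤ) (u : ℤ → ℝ) : ℝ :=
  ∑ j ∈ Icc (-N) N, F (u j) + β * ∑ j ∈ Ico (-N) N, (u (j + 1) - u j) ^ 2

theorem windowEnergy_nonneg {F : ℝ → ℝ} {β : ℝ} {u : ℤ → ℝ} (hF : ∀ j, 0 ≤ F (u j)) (hβ : 0 ≤ β)
    (N : ℤ) : 0 ≤ windowEnergy F β N u :=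
  add_nonneg (sum_nonneg fun j _ => hF j) (mul_nonneg hβ (sum_nonneg fun _ _ => sq_nonneg _))

theorem energy_eq_ofReal_windowEnergy {F : ℝ → ℝ} {β : ℝ} {u : ℤ → ℝ} {N : ℤ}
    (hF1 : F 1 = 0) (hFm1 : F (-1) = 0) (hF : ∀ η ∈ Set.Icc (-1 : ℝ) 1, 0 ≤ F η) (hβ : 0 ≤ β)
    (hu : IsM u) (htop : ∀ j, N ≤ j → u j = 1) :
    energy F β u = ENNReal.ofReal (windowEnergy F β N u) := by
  have hbot := fun j => hu.eq_neg_one_of_le htop (j := j)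
  have hFu : ∀ j, 0 ≤ F (u j) := fun j => hF _ (hu.2.2 j)
  have hpot : ∀ j ∉ Icc (-N) N, ENNReal.ofReal (F (u j)) = 0 := by
    intro j hj
    rw [mem_Icc] at hj
    rcases le_or_gt N j with hj' | hj'
    · simp [htop j hj', hF1]
    · simp [hbot j (by omega), hFm1]
  have hkin : ∀ j ∉ Ico (-N) N, ENNReal.ofReal ((u (j + 1) - u j) ^ 2) = 0 := by
    intro j hj
    rw [mem_Ico] at hj
    rcases le_or_gt N j with hj' | hj'
    · simp [htop j hj', htop (j + 1) (by omega)]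
    · simp [hbot j (by omega), hbot (j + 1) (by omega)]
  rw [energy, tsum_eq_sum hpot, tsum_eq_sum hkin, windowEnergy,
    ENNReal.ofReal_add (sum_nonneg fun j _ => hFu j)
      (mul_nonneg hβ (sum_nonneg fun _ _ => sq_nonneg _)),
    ENNReal.ofReal_mul hβ, ENNReal.ofReal_sum_of_nonneg fun j _ => hFu j,
    ENNReal.ofReal_sum_of_nonneg fun _ _ => sq_nonneg _]

theorem windowEnergy_update_pair {F : ℝ → ℝ} {β : ℝ} {u : ℤ → ℝ} {j0 : ℤ} (hj0 : 0 < j0)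
    (hu : IsM u) (htop : ∀ j, j0 ≤ j → u j = 1) (hFeven : ∀ η, F (-η) = F η) (x : ℝ) :
    windowEnergy F β (j0 + 1) (update (update u j0 x) (-j0) (-x)) =
      windowEnergy F β (j0 + 1) u + 2 * (F x - F 1)
        - 4 * β * (1 - x) * (x - u (j0 - 1)) := by
  set v := update (update u j0 x) (-j0) (-x)
  set a := u (j0 - 1)
  have hv : ∀ j, j ≠ j0 → j ≠ -j0 → v j = u j := fun j h₁ h₂ => by
    simp [v, update_of_ne h₁, update_of_ne h₂]
  have hbot : ∀ j, j ≤ -j0 → u j = -1 := fun j => hu.eq_neg_one_of_le htop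
  have hua : u (-j0 + 1) = -a := by rw [show -j0 + 1 = -(j0 - 1) by ring, hu.1]
  have hvx : v j0 = x := by simp [v, update_of_ne (show j0 ≠ -j0 by omega)]
  have hvmx : v (-j0) = -x := by simp [v]
  have hva : v (j0 - 1) = a := hv _ (by omega) (by omega)
  have hvma : v (-j0 + 1) = -a := (hv _ (by omega) (by omega)).trans hua
  have hvtop : v (j0 + 1) = 1 := (hv _ (by omega) (by omega)).trans (htop _ (by omega))
  have hvbot : v (-j0 - 1) = -1 := (hv _ (by omega) (by omega)).trans (hbot _ (by omega))
  have hpot : ∑ j ∈ Icc (-(j0 + 1)) (j0 + 1), F (v j) - ∑ j ∈ Icc (-(j0 + 1)) (j0 + 1), F (u j)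
      = 2 * (F x - F 1) := by
    rw [sum_sub_sum_eq_of_eqOn_sdiff (t := {j0, -j0}) ?_ ?_]
    · rw [sum_pair (by omega), sum_pair (by omega), hvx, hvmx, htop j0 le_rfl,
        hbot (-j0) le_rfl, hFeven, hFeven]
      ring
    · intro j hj
      simp only [mem_insert, mem_singleton] at hj
      rw [mem_Icc]; omega
    · intro j hj
      simp only [Finset.mem_sdiff, mem_insert, mem_singleton, not_or] at hj
      rw [hv j hj.2.1 hj.2.2]
  have hkin : ∑ j ∈ Ico (-(j0 + 1)) (j0 + 1), (v (j + 1) - v j) ^ 2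
      - ∑ j ∈ Ico (-(j0 + 1)) (j0 + 1), (u (j + 1) - u j) ^ 2
      = - 4 * (1 - x) * (x - a) := by
    rw [sum_sub_sum_eq_of_eqOn_sdiff (t := {j0 - 1, j0, -j0 - 1, -j0}) ?_ ?_]
    · rw [sum_insert (by simp; omega), sum_insert (by simp; omega), sum_pair (by omega),
        sum_insert (by simp; omega), sum_insert (by simp; omega), sum_pair (by omega)]
      simp only [sub_add_cancel]
      rw [hvx, hvmx, hva, hvma, hvtop, hvbot, htop j0 le_rfl, htop (j0 + 1) (by omega),
        hbot (-j0) le_rfl, hbot (-j0 - 1) (by omega), hua]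
      ring
    · intro j hj
      simp only [mem_insert, mem_singleton] at hj
      rw [mem_Ico]; omega
    · intro j hj
      simp only [Finset.mem_sdiff, mem_insert, mem_singleton, not_or, mem_Ico] at hj
      rw [hv j (by omega) (by omega), hv (j + 1) (by omega) (by omega)]
  unfold windowEnergy
  linear_combination hpot + β * hkin

theorem exists_sub_lt_mul_of_hasDerivWithinAt_zero {F : ℝ → ℝ}
    (hF : HasDerivWithinAt F 0 (Set.Icc 0 1) 1) {a c : ℝ} (ha : a < 1) (hc : 0 < c) :
    ∃ x, a < x ∧ x < 1 ∧ F x - F 1 < c * (1 - x) * (x - a) := by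
  have hle : 𝓝[<] (1 : ℝ) ≤ 𝓝[Set.Icc 0 1] 1 := by
    rw [← nhdsWithin_Ioo_eq_nhdsLT one_pos]
    exact nhdsWithin_mono _ Set.Ioo_subset_Icc_self
  have hsmall := ((hasDerivWithinAt_iff_isLittleO.mp hF).mono hle).def
    (half_pos (mul_pos hc (sub_pos.2 ha)))
  obtain ⟨x, hFx, hax, hx1⟩ :=
    (hsmall.and (Ioo_mem_nhdsLT (by linarith : (1 + a) / 2 < 1))).exists
  simp only [smul_zero, sub_zero, Real.norm_eq_abs, abs_sub_comm x] at hFx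
  rw [abs_of_pos (by linarith : 0 < 1 - x)] at hFx
  refine ⟨x, by linarith, hx1, (le_abs_self _).trans_lt (hFx.trans_lt ?_)⟩
  nlinarith [mul_pos hc (sub_pos.2 hx1)]

theorem hasDerivWithinAt_comp_sq_sub_sq {Ψ : ℝ → ℝ} (hΨ : HasDerivWithinAt Ψ 1 (Set.Icc 0 1) 1) :
    HasDerivWithinAt (fun η => Ψ (η ^ 2) - η ^ 2) 0 (Set.Icc 0 1) 1 := by
  have hsq : HasDerivWithinAt (fun η : ℝ => η ^ 2) 2 (Set.Icc 0 1) 1 := by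
    simpa using (hasDerivAt_pow 2 (1 : ℝ)).hasDerivWithinAt
  have hmaps : Set.MapsTo (fun η : ℝ => η ^ 2) (Set.Icc 0 1) (Set.Icc 0 1) :=
    fun η hη => ⟨sq_nonneg η, pow_le_one₀ hη.1 hη.2⟩
  exact ((hΨ.comp_of_eq 1 hsq hmaps (one_pow 2).symm).sub hsq).congr_deriv (by norm_num)

theorem not_exists_terminal_plateau {F : ℝ → ℝ} {β : ℝ} (hβ : 0 < β) (hF1 : F 1 = 0)
    (hFeven : ∀ η, F (-η) = F η) (hF : ∀ η ∈ Set.Icc (-1 : ℝ) 1, 0 ≤ F η)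
    (hF' : HasDerivWithinAt F 0 (Set.Icc 0 1) 1) {u : ℤ → ℝ} (hu : IsM u)
    (hmin : IsMinOn (energy F β) {v | IsM v} u) :
    ¬ ∃ j0, u (j0 - 1) < 1 ∧ ∀ j, j0 ≤ j → u j = 1 := by
  rintro ⟨j0, ha, htop⟩
  have hj0 : 0 < j0 := by
    by_contra! h
    simpa [hu.map_zero] using htop 0 (by omega)
  obtain ⟨x, hax, hx1, hFx⟩ :=
    exists_sub_lt_mul_of_hasDerivWithinAt_zero hF' ha (mul_pos two_pos hβ)
  set v := update (update u j0 x) (-j0) (-x)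
  have hv : IsM v := hu.update_pair hj0 hax.le (by rw [htop _ (by omega)]; exact hx1.le)
  have hvtop : ∀ j, j0 + 1 ≤ j → v j = 1 := fun j hj => by
    simp only [v]
    rw [update_of_ne (by omega), update_of_ne (by omega), htop _ (by omega)]
  have hFm1 : F (-1) = 0 := by rw [hFeven, hF1]
  have hutop : ∀ j, j0 + 1 ≤ j → u j = 1 := fun j hj => htop j (by omega)
  have key : energy F β u ≤ energy F β v := hmin hv
  rw [energy_eq_ofReal_windowEnergy hF1 hFm1 hF hβ.le hu hutop,
    energy_eq_ofReal_windowEnergy hF1 hFm1 hF hβ.le hv hvtop,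
    ENNReal.ofReal_le_ofReal_iff (windowEnergy_nonneg (fun j => hF _ (hv.2.2 j)) hβ.le _),
    windowEnergy_update_pair hj0 hu htop hFeven] at key
  linarith

theorem stmt4_general (Ψ : ℝ → ℝ) (β : ℝ) (hβ : 0 < β)
    (hΨ1 : Ψ 1 = 1) (hΨ'1 : derivWithin Ψ (Set.Icc (0 : ℝ) 1) 1 = 1)
    (F : ℝ → ℝ) (hFdef : ∀ η, F η = Ψ (η ^ 2) - η ^ 2)
    (hFpos : ∀ η ∈ Set.Ioo (-1 : ℝ) 1, 0 < F η)
    (u : ℤ → ℝ) (hu : IsM u)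
    (hmin : ∀ v : ℤ → ℝ, IsM v → energy F β u ≤ energy F β v) :
    (¬ ∃ j0 : ℤ, u (j0 - 1) < 1 ∧ ∀ j : ℤ, j0 ≤ j → u j = 1) ∧
      (∀ j : ℤ, u j < 1 ∧ -1 < u j) := by
  have hFeven : ∀ η, F (-η) = F η := fun η => by simp [hFdef]
  have hF1 : F 1 = 0 := by simp [hFdef, hΨ1]
  have hF : ∀ η ∈ Set.Icc (-1 : ℝ) 1, 0 ≤ F η := by
    rintro η ⟨hη₁, hη₂⟩
    rcases hη₁.eq_or_lt with rfl | hη₁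
    · rw [hFeven, hF1]
    rcases hη₂.eq_or_lt with rfl | hη₂
    · rw [hF1]
    exact (hFpos η ⟨hη₁, hη₂⟩).le
  have hΨ' : HasDerivWithinAt Ψ 1 (Set.Icc 0 1) 1 := by
    have hd : derivWithin Ψ (Set.Icc 0 1) 1 ≠ 0 := by rw [hΨ'1]; exact one_ne_zero
    simpa only [hΨ'1] using (differentiableWithinAt_of_derivWithin_ne_zero hd).hasDerivWithinAt
  have hF' : HasDerivWithinAt F 0 (Set.Icc 0 1) 1 := by
    simpa only [← funext hFdef] using hasDerivWithinAt_comp_sq_sub_sq hΨ'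
  have hplateau := not_exists_terminal_plateau hβ hF1 hFeven hF hF' hu hmin
  have hlt : ∀ j, u j < 1 := fun j => (hu.2.2 j).2.lt_of_ne fun hj =>
    hplateau <| exists_terminal_plateau hu.2.1 (fun j => (hu.2.2 j).2) (k := 0)
      (by simp [hu.map_zero]) hj
  exact ⟨hplateau, fun j => ⟨hlt j, by linarith [hlt (-j), hu.1 j]⟩⟩

/-- a minimizer of the energy has no terminal plateau at `1`;
consequently `-1 < u_j < 1` for all `j`. -/
theorem stmt4 (Ψ : ℝ → ℝ) (β : ℝ) (hβ : 0 < β)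
    (hΨ : ContDiffOn ℝ 2 Ψ (Set.Icc (0 : ℝ) 1))
    (hΨ1 : Ψ 1 = 1) (hΨ'1 : derivWithin Ψ (Set.Icc (0 : ℝ) 1) 1 = 1)
    (F : ℝ → ℝ) (hFdef : ∀ η, F η = Ψ (η ^ 2) - η ^ 2)
    (hFpos : ∀ η ∈ Set.Ioo (-1 : ℝ) 1, 0 < F η)
    (u : ℤ → ℝ) (hu : IsM u)
    (hmin : ∀ v : ℤ → ℝ, IsM v → energy F β u ≤ energy F β v) :
    (¬ ∃ j0 : ℤ, u (j0 - 1) < 1 ∧ ∀ j : ℤ, j0 ≤ j → u j = 1) ∧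
      (∀ j : ℤ, u j < 1 ∧ -1 < u j) :=
  stmt4_general Ψ β hβ hΨ1 hΨ'1 F hFdef hFpos u hu hmin
end

section
/- Under the assumptions of the previous statement (minimizer $u \in \mathcal{M}$ of $\mathcal{E}$, with $-1 < u_j < 1$ for all $j$), $u$ cannot have a constant plateau: there exist no indices $j_1 < j_2$ with $u_{j_1-1} < u_{j_1} = u_{j_1+1} = \cdots = u_{j_2} < u_{j_2+1}$. Hence every minimizer is strictly increasing. -/
/-!
Lowering `u` at the left end `j₁` of a plateau of height `c > 0` and raising it at the right end
`j₂` by `t` (together with the mirror images at `-j₁`, `-j₂`) keeps the profile in `𝓜` for small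
`t > 0`. The potential terms change by `o(t)`, since `F` is differentiable at `c` and the
contributions at `j₁` and `j₂` cancel to first order, whereas the gradient term decreases at a rate
proportional to the two jumps `u_{j₁} - u_{j₁-1}` and `u_{j₂+1} - u_{j₂}`. A plateau at height `0`
is symmetric about `0`, and there raising `u_{j₂}` alone (and lowering `u_{-j₂}`) already decreases
the energy; plateaus of negative height are mirror images of positive ones.
Strict monotonicity follows because finite energy makes every level set `{u = c}` with `F c > 0`
finite, so two equal values of `u` lie on a plateau with strict jumps at both ends.
-/

open Filter
open scoped ENNReal

open Set Topology

theorem HasDerivAt.nonneg_of_eventually_le_right {f : ℝ → ℝ} {f' x : ℝ} (hf : HasDerivAt f f' x)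
    (h : ∀ᶠ y in 𝓝[>] x, f x ≤ f y) : 0 ≤ f' := by
  have hslope :=
    (hasDerivWithinAt_iff_tendsto_slope' (s := Ioi x) (lt_irrefl x)).1 hf.hasDerivWithinAt
  refine ge_of_tendsto hslope ?_
  filter_upwards [h, self_mem_nhdsWithin] with y hy hxy
  rw [slope_def_field]
  exact div_nonneg (sub_nonneg.2 hy) (sub_nonneg.2 (le_of_lt hxy))

theorem sum_le_sum_of_tsum_ofReal_le {ι : Type*} {f g : ι → ℝ} (s : Finset ι)
    (hf : ∀ i, 0 ≤ f i) (hg : ∀ i, 0 ≤ g i) (hfg : ∀ i ∉ s, f i = g i)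
    (hle : ∑' i, ENNReal.ofReal (f i) ≤ ∑' i, ENNReal.ofReal (g i))
    (hfin : ∑' i, ENNReal.ofReal (f i) ≠ ⊤) :
    ∑ i ∈ s, f i ≤ ∑ i ∈ s, g i := by
  rw [← ENNReal.sum_add_tsum_compl s, ← ENNReal.sum_add_tsum_compl s] at hle
  rw [← ENNReal.sum_add_tsum_compl s] at hfin
  have htail : ∑' i : ↥(s : Set ι)ᶜ, ENNReal.ofReal (f i) =
      ∑' i : ↥(s : Set ι)ᶜ, ENNReal.ofReal (g i) := tsum_congr fun i => by rw [hfg i i.2]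
  rw [htail] at hle hfin
  rw [ENNReal.add_le_add_iff_right (ENNReal.add_ne_top.1 hfin).2,
    ← ENNReal.ofReal_sum_of_nonneg fun i _ => hf i, ← ENNReal.ofReal_sum_of_nonneg fun i _ => hg i,
    ENNReal.ofReal_le_ofReal_iff (Finset.sum_nonneg fun i _ => hg i)] at hle
  exact hle

def discreteLaplacian (u : ℤ → ℝ) (j : ℤ) : ℝ := u (j + 1) + u (j - 1) - 2 * u j

theorem discreteLaplacian_neg {u : ℤ → ℝ} (hu : ∀ j, u (-j) = -u j) (j : ℤ) :
    discreteLaplacian u (-j) = -discreteLaplacian u j := by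
  simp only [discreteLaplacian, show -j + 1 = -(j - 1) by ring, show -j - 1 = -(j + 1) by ring, hu]
  ring

theorem sum_sub_mul_sub_eq_neg_sum_mul_discreteLaplacian (u : ℤ → ℝ) {w : ℤ → ℝ} {s : Finset ℤ}
    (hw : ∀ j ∉ s, w j = 0) :
    ∑ j ∈ s ∪ s.image (· - 1), (u (j + 1) - u j) * (w (j + 1) - w j) =
      -∑ j ∈ s, w j * discreteLaplacian u j := by
  set s' := s ∪ s.image (· - 1)
  set g : ℤ → ℝ := fun k => w k * (u k - u (k - 1))
  have hshift : ∑ j ∈ s', g (j + 1) = ∑ j ∈ s, g j := by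
    have hmap := Finset.sum_map s' (addRightEmbedding 1) g
    simp only [addRightEmbedding_apply] at hmap
    rw [← hmap]
    refine (Finset.sum_subset (fun k hk => ?_) fun k _ hk => by simp [g, hw k hk]).symm
    exact Finset.mem_map.2 ⟨k - 1, Finset.mem_union_right _ (Finset.mem_image_of_mem _ hk), by simp⟩
  have hrest : ∑ j ∈ s', w j * (u (j + 1) - u j) = ∑ j ∈ s, w j * (u (j + 1) - u j) :=
    (Finset.sum_subset Finset.subset_union_left fun k _ hk => by simp [hw k hk]).symm
  calc ∑ j ∈ s', (u (j + 1) - u j) * (w (j + 1) - w j)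
      = ∑ j ∈ s', g (j + 1) - ∑ j ∈ s', w j * (u (j + 1) - u j) := by
        rw [← Finset.sum_sub_distrib]
        exact Finset.sum_congr rfl fun j _ => by simp only [g, add_sub_cancel_right]; ring
    _ = -∑ j ∈ s, w j * discreteLaplacian u j := by
        rw [hshift, hrest, ← Finset.sum_sub_distrib, ← Finset.sum_neg_distrib]
        exact Finset.sum_congr rfl fun j _ => by simp only [g, discreteLaplacian]; ring

theorem IsM.map_zero_s5 {u : ℤ → ℝ} (hu : IsM u) : u 0 = 0 := by
  linarith [hu.1 0, show u (-0) = u 0 from rfl]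

theorem IsM.of_odd {v : ℤ → ℝ} (hodd : ∀ j, v (-j) = -v j)
    (hmono : ∀ n, 0 ≤ n → v n ≤ v (n + 1)) (hrange : ∀ n, 0 ≤ n → v n ∈ Icc (-1 : ℝ) 1) :
    IsM v := by
  refine ⟨hodd, monotone_int_of_le_succ fun n => ?_, fun j => ?_⟩
  · rcases le_or_gt 0 n with hn | hn
    · exact hmono n hn
    · have h := hmono (-(n + 1)) (by omega)
      rw [show -(n + 1) + 1 = -n by ring, hodd, hodd] at h
      linarith
  · rcases le_or_gt 0 j with hj | hj
    · exact hrange j hj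
    · obtain ⟨h₁, h₂⟩ := hrange (-j) (by omega)
      rw [hodd] at h₁ h₂
      constructor <;> linarith

def oddSingle (k : ℤ) : ℤ → ℝ := Pi.single k 1 - Pi.single (-k) 1

theorem oddSingle_neg_apply (k j : ℤ) : oddSingle k (-j) = -oddSingle k j := by
  simp only [oddSingle, Pi.sub_apply, Pi.single_apply, neg_eq_iff_eq_neg]
  split_ifs <;> first | omega | ring

theorem add_smul_oddSingle_apply_of_nonneg (u : ℤ → ℝ) (x : ℝ) {k n : ℤ} (hk : 0 < k)
    (hn : 0 ≤ n) : (u + x • oddSingle k) n = u n + if n = k then x else 0 := by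
  simp [oddSingle, Pi.single_apply, show n ≠ -k by omega]

theorem oddSingle_eq_zero {k j : ℤ} (hj : j ∉ ({k, -k} : Finset ℤ)) : oddSingle k j = 0 := by
  simp only [Finset.mem_insert, Finset.mem_singleton, not_or] at hj
  simp [oddSingle, hj.1, hj.2]

theorem sum_oddSingle_mul {k : ℤ} {s : Finset ℤ} (hks : k ∈ s) (hks' : -k ∈ s)
    (g : ℤ → ℝ) : ∑ j ∈ s, oddSingle k j * g j = g k - g (-k) := by
  simp [oddSingle, sub_mul, Finset.sum_sub_distrib, Pi.single_apply, hks, hks']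

theorem IsM.add_smul_oddSingle {u : ℤ → ℝ} (hu : IsM u) {k : ℤ} (hk : 0 < k) {x : ℝ}
    (h₁ : u (k - 1) ≤ u k + x) (h₂ : u k + x ≤ u (k + 1)) : IsM (u + x • oddSingle k) := by
  have hval := fun n => add_smul_oddSingle_apply_of_nonneg u x (n := n) hk
  refine IsM.of_odd (fun j => ?_) (fun n hn => ?_) (fun n hn => ?_)
  · simp only [Pi.add_apply, Pi.smul_apply, smul_eq_mul, hu.1 j, oddSingle_neg_apply]
    ring
  · rw [hval n hn, hval (n + 1) (by omega)]
    have hmono := hu.2.1 (Int.le_add_one (le_refl n))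
    split_ifs with hnk
    · omega
    · subst hnk
      linarith
    · obtain rfl : k = n + 1 := by omega
      simpa using h₁
    · linarith
  · rw [hval n hn]
    split_ifs with hnk
    · subst hnk
      exact ⟨by linarith [(hu.2.2 (n - 1)).1], by linarith [(hu.2.2 (n + 1)).2]⟩
    · simpa using hu.2.2 n

def IsPlateau (u : ℤ → ℝ) (j₁ j₂ : ℤ) : Prop :=
  j₁ < j₂ ∧ u (j₁ - 1) < u j₁ ∧ u j₂ < u (j₂ + 1) ∧ ∀ j, j₁ ≤ j → j ≤ j₂ → u j = u j₁

theorem IsPlateau.neg {u : ℤ → ℝ} (hodd : ∀ j, u (-j) = -u j) {j₁ j₂ : ℤ}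
    (hp : IsPlateau u j₁ j₂) : IsPlateau u (-j₂) (-j₁) := by
  obtain ⟨h12, hL, hR, hP⟩ := hp
  have hj₂ := hP j₂ h12.le le_rfl
  refine ⟨by omega, ?_, ?_, fun j hj₁ hj₂' => ?_⟩
  · rw [show -j₂ - 1 = -(j₂ + 1) by ring, hodd, hodd]
    linarith
  · rw [show -j₁ + 1 = -(j₁ - 1) by ring, hodd, hodd]
    linarith
  · rw [show u j = -u (-j) by rw [hodd, neg_neg], hP (-j) (by omega) (by omega), hodd, hj₂]

theorem Monotone.exists_isPlateau {u : ℤ → ℝ} (hu : Monotone u) {i j : ℤ} (hij : i < j)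
    (heq : u i = u j) (hfin : {k | u k = u i}.Finite) : ∃ j₁ j₂, IsPlateau u j₁ j₂ := by
  set S := hfin.toFinset
  have hmem : ∀ k, k ∈ S ↔ u k = u i := by simp [S]
  have hi : i ∈ S := (hmem i).2 rfl
  set j₁ := S.min' ⟨i, hi⟩
  set j₂ := S.max' ⟨i, hi⟩
  have h₁ : u j₁ = u i := (hmem _).1 (S.min'_mem _)
  have h₂ : u j₂ = u i := (hmem _).1 (S.max'_mem _)
  refine ⟨j₁, j₂, (S.min'_le i hi).trans_lt (hij.trans_le (S.le_max' j ((hmem j).2 heq.symm))),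
    (hu (by omega)).lt_of_ne fun h => ?_, (hu (by omega)).lt_of_ne fun h => ?_,
    fun k hk₁ hk₂ => le_antisymm ?_ (hu hk₁)⟩
  · have := S.min'_le (j₁ - 1) ((hmem _).2 (h.trans h₁))
    omega
  · have := S.le_max' (j₂ + 1) ((hmem _).2 (h.symm.trans h₂))
    omega
  · linarith [hu hk₂]

def energyDensity (F : ℝ → ℝ) (β : ℝ) (u : ℤ → ℝ) (j : ℤ) : ℝ :=
  F (u j) + β * (u (j + 1) - u j) ^ 2

theorem energy_eq_tsum_energyDensity {F : ℝ → ℝ} {β : ℝ} (hβ : 0 ≤ β) {u : ℤ → ℝ}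
    (hF : ∀ j, 0 ≤ F (u j)) : energy F β u = ∑' j, ENNReal.ofReal (energyDensity F β u j) := by
  rw [energy, ← ENNReal.tsum_mul_left, ← ENNReal.tsum_add]
  refine tsum_congr fun j => ?_
  rw [← ENNReal.ofReal_mul hβ, ← ENNReal.ofReal_add (hF j) (by positivity), energyDensity]

section Minimizer

variable {F : ℝ → ℝ} {β : ℝ} {u : ℤ → ℝ}

theorem energy_ne_top_of_isMinimizer (hFone : F 1 = 0) (hFneg : F (-1) = 0)
    (hmin : ∀ v, IsM v → energy F β u ≤ energy F β v) : energy F β u ≠ ⊤ := by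
  set v : ℤ → ℝ := fun j => ((max (-1) (min 1 j) : ℤ) : ℝ)
  have hv : IsM v := by
    refine ⟨fun j => ?_, fun i j hij => ?_, fun j => ?_⟩
    · simp only [v, ← Int.cast_neg]
      congr 1
      omega
    · simp only [v, Int.cast_le]
      omega
    · exact ⟨by simp [v], by simp [v]⟩
  have hflat : ∀ j ∉ ({-1, 0} : Finset ℤ), F (v j) = 0 ∧ v (j + 1) - v j = 0 := by
    intro j hj
    simp only [Finset.mem_insert, Finset.mem_singleton] at hj
    rcases (by omega : (max (-1) (min 1 j) = 1 ∧ max (-1) (min 1 (j + 1)) = 1) ∨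
        (max (-1) (min 1 j) = -1 ∧ max (-1) (min 1 (j + 1)) = -1)) with ⟨h, h'⟩ | ⟨h, h'⟩ <;>
      simp only [v, h, h', Int.cast_one, Int.cast_neg, hFone, hFneg, sub_self, and_self]
  refine ne_top_of_le_ne_top ?_ (hmin v hv)
  rw [energy, tsum_eq_sum fun j hj => by rw [(hflat j hj).1, ENNReal.ofReal_zero],
    tsum_eq_sum fun j hj => by rw [(hflat j hj).2, sq, mul_zero, ENNReal.ofReal_zero]]
  have hsum : ∀ g : ℤ → ℝ, ∑ j ∈ ({-1, 0} : Finset ℤ), ENNReal.ofReal (g j) ≠ ⊤ :=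
    fun g => ENNReal.sum_ne_top.2 fun _ _ => ENNReal.ofReal_ne_top
  exact ENNReal.add_ne_top.2 ⟨hsum _, ENNReal.mul_ne_top ENNReal.ofReal_ne_top (hsum _)⟩

theorem finite_setOf_eq_of_energy_ne_top {c : ℝ} (hc : 0 < F c) (hfin : energy F β u ≠ ⊤) :
    {j | u j = c}.Finite := by
  by_contra h
  have : Infinite {j | u j = c} := Set.infinite_coe_iff.2 h
  refine hfin (top_unique ?_)
  calc ⊤ = ∑' _ : {j | u j = c}, ENNReal.ofReal (F c) :=
        (ENNReal.tsum_const_eq_top_of_ne_zero (by simpa using hc)).symm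
    _ = ∑' j : {j | u j = c}, ENNReal.ofReal (F (u j)) := tsum_congr fun j => by rw [j.2]
    _ ≤ ∑' j, ENNReal.ofReal (F (u j)) :=
        ENNReal.tsum_comp_le_tsum_of_injective Subtype.val_injective _
    _ ≤ energy F β u := le_self_add

/-- In the notation of the paper the sum is `2 ∑ⱼ wⱼ 𝒢(u)ⱼ`, as `F' η = 2 (Ψ'(η²) η - η)`. -/
theorem firstVariation_nonneg (hβ : 0 ≤ β) (hF₀ : ∀ x ∈ Icc (-1 : ℝ) 1, 0 ≤ F x)
    (hFd : ∀ j, DifferentiableAt ℝ F (u j)) (hu : IsM u) (hfin : energy F β u ≠ ⊤)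
    (hmin : ∀ v, IsM v → energy F β u ≤ energy F β v) {w : ℤ → ℝ} {s : Finset ℤ}
    (hw : ∀ j ∉ s, w j = 0) {t₀ : ℝ} (ht₀ : 0 < t₀) (hadm : ∀ t ∈ Ioc 0 t₀, IsM (u + t • w)) :
    0 ≤ ∑ j ∈ s, w j * (deriv F (u j) - 2 * β * discreteLaplacian u j) := by
  set s' := s ∪ s.image (· - 1)
  set φ : ℝ → ℝ := fun t => ∑ j ∈ s', energyDensity F β (u + t • w) j
  have hE : ∀ v, IsM v → energy F β v = ∑' j, ENNReal.ofReal (energyDensity F β v j) :=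
    fun v hv => energy_eq_tsum_energyDensity hβ fun j => hF₀ _ (hv.2.2 j)
  have hdens : ∀ v, IsM v → ∀ j, 0 ≤ energyDensity F β v j :=
    fun v hv j => add_nonneg (hF₀ _ (hv.2.2 j)) (by positivity)
  have hlocal : ∀ t ∈ Ioc 0 t₀, φ 0 ≤ φ t := by
    intro t ht
    have hv := hadm t ht
    simp only [φ, zero_smul, add_zero]
    refine sum_le_sum_of_tsum_ofReal_le s' (hdens u hu) (hdens _ hv) (fun j hj => ?_)
      (by rw [← hE u hu, ← hE _ hv]; exact hmin _ hv) (by rwa [← hE u hu])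
    have hj₀ : j ∉ s := fun h => hj (Finset.mem_union_left _ h)
    have hj₁ : j + 1 ∉ s := fun h =>
      hj (Finset.mem_union_right _ (Finset.mem_image.2 ⟨_, h, add_sub_cancel_right j 1⟩))
    simp [energyDensity, hw j hj₀, hw (j + 1) hj₁]
  have hderiv : HasDerivAt φ (∑ j ∈ s', (deriv F (u j) * w j +
      β * (2 * ((u (j + 1) - u j) * (w (j + 1) - w j))))) 0 := by
    refine HasDerivAt.fun_sum fun j _ => ?_
    have hline : ∀ i, HasDerivAt (fun t : ℝ => u i + t * w i) (w i) 0 := fun i => by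
      simpa using ((hasDerivAt_id (0 : ℝ)).mul_const (w i)).const_add (u i)
    have hF' := (hFd j).hasDerivAt.comp_of_eq (0 : ℝ) (hline j) (by simp)
    have hsq := (((hline (j + 1)).sub (hline j)).pow 2).const_mul β
    convert hF'.add hsq using 1
    · ext t
      simp [energyDensity]
    · simp only [Pi.sub_apply, zero_mul, add_zero, Nat.cast_ofNat, Nat.reduceSub, pow_one]
      ring
  have hF' : ∑ j ∈ s', deriv F (u j) * w j = ∑ j ∈ s, w j * deriv F (u j) := by
    rw [← Finset.sum_subset Finset.subset_union_left fun j _ hj => by simp [hw j hj]]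
    exact Finset.sum_congr rfl fun j _ => mul_comm _ _
  convert hderiv.nonneg_of_eventually_le_right
    (eventually_of_mem (Ioc_mem_nhdsGT ht₀) hlocal) using 1
  rw [Finset.sum_add_distrib, ← Finset.mul_sum, ← Finset.mul_sum,
    sum_sub_mul_sub_eq_neg_sum_mul_discreteLaplacian u hw, hF']
  have hsplit : ∑ j ∈ s, w j * (deriv F (u j) - 2 * β * discreteLaplacian u j) =
      ∑ j ∈ s, w j * deriv F (u j) - 2 * β * ∑ j ∈ s, w j * discreteLaplacian u j := by
    rw [Finset.mul_sum, ← Finset.sum_sub_distrib]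
    exact Finset.sum_congr rfl fun j _ => by ring
  rw [hsplit]
  ring

theorem not_isPlateau_of_pos (hβ : 0 < β) (hF₀ : ∀ x ∈ Icc (-1 : ℝ) 1, 0 ≤ F x)
    (hFd : ∀ j, DifferentiableAt ℝ F (u j)) (hu : IsM u) (hfin : energy F β u ≠ ⊤)
    (hmin : ∀ v, IsM v → energy F β u ≤ energy F β v) {j₁ j₂ : ℤ} (hc : 0 < u j₁) :
    ¬ IsPlateau u j₁ j₂ := by
  rintro ⟨h12, hL, hR, hP⟩
  have hj₁ : 0 < j₁ := by
    by_contra h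
    linarith [hu.2.1 (not_lt.1 h), hu.map_zero_s5]
  have hj₂ : u j₂ = u j₁ := hP j₂ h12.le le_rfl
  set t₀ := min (u j₁ - u (j₁ - 1)) (u (j₂ + 1) - u j₂)
  have hadm : ∀ t ∈ Ioc 0 t₀, IsM (u + t • (oddSingle j₂ - oddSingle j₁)) := by
    rintro t ⟨ht, ht₀⟩
    have htL : t ≤ u j₁ - u (j₁ - 1) := ht₀.trans (min_le_left _ _)
    have htR : t ≤ u (j₂ + 1) - u j₂ := ht₀.trans (min_le_right _ _)
    have hv := hu.add_smul_oddSingle (k := j₂) (x := t) (by omega)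
      (by linarith [hP (j₂ - 1) (by omega) (by omega)]) (by linarith)
    have hv' := hv.add_smul_oddSingle (k := j₁) (x := -t) hj₁ ?_ ?_
    · rwa [add_assoc, neg_smul, ← sub_eq_add_neg, ← smul_sub] at hv'
    · rw [add_smul_oddSingle_apply_of_nonneg _ _ (by omega) (by omega),
        add_smul_oddSingle_apply_of_nonneg _ _ (by omega) (by omega),
        if_neg (by omega), if_neg (by omega)]
      linarith
    · rw [add_smul_oddSingle_apply_of_nonneg _ _ (by omega) (by omega),
        add_smul_oddSingle_apply_of_nonneg _ _ (by omega) (by omega), if_neg (by omega)]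
      split_ifs <;> linarith [hP (j₁ + 1) (by omega) (by omega)]
  have hw : ∀ j ∉ ({j₁, -j₁, j₂, -j₂} : Finset ℤ), (oddSingle j₂ - oddSingle j₁) j = 0 := by
    intro j hj
    simp only [Finset.mem_insert, Finset.mem_singleton, not_or] at hj
    rw [Pi.sub_apply, oddSingle_eq_zero (by simp [hj.2.2.1, hj.2.2.2]),
      oddSingle_eq_zero (by simp [hj.1, hj.2.1]), sub_zero]
  have h := firstVariation_nonneg hβ.le hF₀ hFd hu hfin hmin hw
    (lt_min (by linarith) (by linarith)) hadm
  simp only [Pi.sub_apply, sub_mul, Finset.sum_sub_distrib] at h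
  rw [sum_oddSingle_mul (by simp) (by simp), sum_oddSingle_mul (by simp) (by simp),
    discreteLaplacian_neg hu.1, discreteLaplacian_neg hu.1, hu.1 j₁, hu.1 j₂, hj₂] at h
  have hΔ₁ : discreteLaplacian u j₁ = u (j₁ - 1) - u j₁ := by
    rw [discreteLaplacian, hP (j₁ + 1) (by omega) (by omega)]
    ring
  have hΔ₂ : discreteLaplacian u j₂ = u (j₂ + 1) - u j₁ := by
    rw [discreteLaplacian, hP (j₂ - 1) (by omega) (by omega), hj₂]
    ring
  rw [hΔ₁, hΔ₂] at h
  nlinarith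

theorem not_isPlateau_of_eq_zero (hβ : 0 < β) (hF₀ : ∀ x ∈ Icc (-1 : ℝ) 1, 0 ≤ F x)
    (hFd : ∀ j, DifferentiableAt ℝ F (u j)) (hu : IsM u) (hfin : energy F β u ≠ ⊤)
    (hmin : ∀ v, IsM v → energy F β u ≤ energy F β v) {j₁ j₂ : ℤ} (hc : u j₁ = 0)
    (hj₂ : 0 < j₂) : ¬ IsPlateau u j₁ j₂ := by
  rintro ⟨h12, -, hR, hP⟩
  have hm : u j₂ = 0 := (hP j₂ h12.le le_rfl).trans hc
  have hm' : u (j₂ - 1) = 0 := (hP (j₂ - 1) (by omega) (by omega)).trans hc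
  have hadm : ∀ t ∈ Ioc 0 (u (j₂ + 1)), IsM (u + t • oddSingle j₂) := fun t ht =>
    hu.add_smul_oddSingle hj₂ (by linarith [ht.1]) (by linarith [ht.2])
  have h := firstVariation_nonneg hβ.le hF₀ hFd hu hfin hmin (fun j hj => oddSingle_eq_zero hj)
    (by linarith) hadm
  rw [sum_oddSingle_mul (by simp) (by simp), discreteLaplacian_neg hu.1, hu.1 j₂, hm, neg_zero,
    discreteLaplacian, hm, hm'] at h
  nlinarith

end Minimizer

theorem differentiableAt_comp_sq {Ψ : ℝ → ℝ} (hΨ : DifferentiableOn ℝ Ψ (Icc 0 1)) {x : ℝ}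
    (hx : x ∈ Ioo (-1 : ℝ) 1) : DifferentiableAt ℝ (fun y => Ψ (y ^ 2)) x := by
  have hsq : ∀ y ∈ Ioo (-1 : ℝ) 1, y ^ 2 ∈ Icc (0 : ℝ) 1 := fun y hy =>
    ⟨sq_nonneg y, by nlinarith [hy.1, hy.2]⟩
  exact ((hΨ _ (hsq x hx)).hasDerivWithinAt.comp_hasDerivAt (h := fun y : ℝ => y ^ 2) x
    (hasDerivAt_pow 2 x) (eventually_of_mem (isOpen_Ioo.mem_nhds hx) hsq)).differentiableAt

theorem stmt5_general (Ψ : ℝ → ℝ) (β : ℝ) (hβ : 0 < β)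
    (hΨ : ContDiffOn ℝ 2 Ψ (Set.Icc (0 : ℝ) 1))
    (hΨ1 : Ψ 1 = 1)
    (F : ℝ → ℝ) (hFdef : ∀ η, F η = Ψ (η ^ 2) - η ^ 2)
    (hFpos : ∀ η ∈ Set.Ioo (-1 : ℝ) 1, 0 < F η)
    (u : ℤ → ℝ) (hu : IsM u) (hopen : ∀ j : ℤ, -1 < u j ∧ u j < 1)
    (hmin : ∀ v : ℤ → ℝ, IsM v → energy F β u ≤ energy F β v) :
    (¬ ∃ j1 j2 : ℤ, j1 < j2 ∧ u (j1 - 1) < u j1 ∧ u j2 < u (j2 + 1) ∧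
        ∀ j : ℤ, j1 ≤ j → j ≤ j2 → u j = u j1) ∧
      StrictMono u := by
  have hFone : F 1 = 0 := by simp [hFdef, hΨ1]
  have hFneg : F (-1) = 0 := by simp [hFdef, hΨ1]
  have hF₀ : ∀ x ∈ Icc (-1 : ℝ) 1, 0 ≤ F x := by
    rintro x ⟨h₁, h₂⟩
    rcases h₁.eq_or_lt with rfl | h₁
    · exact hFneg.ge
    rcases h₂.eq_or_lt with rfl | h₂
    · exact hFone.ge
    exact (hFpos x ⟨h₁, h₂⟩).le
  have hFd : ∀ j, DifferentiableAt ℝ F (u j) := fun j => by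
    rw [funext hFdef]
    exact (differentiableAt_comp_sq (hΨ.differentiableOn two_ne_zero) (hopen j)).sub
      (differentiableAt_pow 2)
  have hfin := energy_ne_top_of_isMinimizer hFone hFneg hmin
  have hno : ¬ ∃ j₁ j₂, IsPlateau u j₁ j₂ := by
    rintro ⟨j₁, j₂, hp⟩
    have hmirror : u (-j₂) = -u j₁ := by rw [hu.1, hp.2.2.2 j₂ hp.1.le le_rfl]
    rcases lt_trichotomy (u j₁) 0 with hc | hc | hc
    · exact not_isPlateau_of_pos hβ hF₀ hFd hu hfin hmin (by linarith) (hp.neg hu.1)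
    · rcases lt_or_ge 0 j₂ with hj₂ | hj₂
      · exact not_isPlateau_of_eq_zero hβ hF₀ hFd hu hfin hmin hc hj₂ hp
      · exact not_isPlateau_of_eq_zero hβ hF₀ hFd hu hfin hmin (by linarith) (by linarith [hp.1])
          (hp.neg hu.1)
    · exact not_isPlateau_of_pos hβ hF₀ hFd hu hfin hmin hc hp
  refine ⟨hno, fun i j hij => (hu.2.1 hij.le).lt_of_ne fun heq => hno ?_⟩
  exact hu.2.1.exists_isPlateau hij heq
    (finite_setOf_eq_of_energy_ne_top (hFpos _ ⟨(hopen i).1, (hopen i).2⟩) hfin)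

/-- a minimizer of the energy with `-1 < u_j < 1` has no constant
plateau, hence is strictly increasing. -/
theorem stmt5 (Ψ : ℝ → ℝ) (β : ℝ) (hβ : 0 < β)
    (hΨ : ContDiffOn ℝ 2 Ψ (Set.Icc (0 : ℝ) 1))
    (hΨ1 : Ψ 1 = 1) (hΨ'1 : derivWithin Ψ (Set.Icc (0 : ℝ) 1) 1 = 1)
    (F : ℝ → ℝ) (hFdef : ∀ η, F η = Ψ (η ^ 2) - η ^ 2)
    (hFpos : ∀ η ∈ Set.Ioo (-1 : ℝ) 1, 0 < F η)
    (u : ℤ → ℝ) (hu : IsM u) (hopen : ∀ j : ℤ, -1 < u j ∧ u j < 1)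
    (hmin : ∀ v : ℤ → ℝ, IsM v → energy F β u ≤ energy F β v) :
    (¬ ∃ j1 j2 : ℤ, j1 < j2 ∧ u (j1 - 1) < u j1 ∧ u j2 < u (j2 + 1) ∧
        ∀ j : ℤ, j1 ≤ j → j ≤ j2 → u j = u j1) ∧
      StrictMono u :=
  stmt5_general Ψ β hβ hΨ hΨ1 F hFdef hFpos u hu hopen hmin
end

section
/- Let $\Psi$ be $C^2$ on $[0,1]$ with $\Psi(1)=\Psi'(1)=1$, $\Psi''(1) > 0$, and $\Psi(x) > x$ for $0 \leq x < 1$, and let $\beta > 0$. Then there exists an odd, strictly increasing sequence $u : \mathbb{Z} \to (-1,1)$ with $u_j \to \pm 1$ as $j \to \pm\infty$ solving the standing wave equation $\Psi'(u_j^2)u_j - u_j = \beta(u_{j+1} + u_{j-1} - 2u_j)$ for all $j \in \mathbb{Z}$. -/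
/-!
Half of an odd profile is a nondecreasing `w : ℕ → [0, 1]` with `w 0 = 0`. These form a compact
set on which the energy is lower semicontinuous, so it has a minimizer `w` of finite energy.
Moving the single value `w (m + 1)` inside `[w m, w (m + 2)]` shows that it minimizes a function
of one variable there; its one-sided derivatives give the two halves of the Euler–Lagrange
equation, one for each neighbour that differs from `w (m + 1)`. Because `W' 1 = 0` the profile
never reaches `1`; finite energy forces `W (w n) → 0`, hence `w n → 1`. A plateau at a level
`c < 1` would give `W' c > 0` at its right end and `W' c < 0` at its left end (or `c = 0`, where
`W' 0 = 0`), so `w` is strictly increasing and the full equation holds. Its odd extension to `ℤ`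
is the wave.
-/

open Filter Set Topology
open scoped ENNReal

theorem ENNReal.sum_le_sum_of_tsum_le_tsum {α : Type*} {f g : α → ℝ≥0∞} {s : Finset α}
    (hfg : ∀ a ∉ s, f a = g a) (h : ∑' a, f a ≤ ∑' a, g a) (hf : ∑' a, f a ≠ ∞) :
    ∑ a ∈ s, f a ≤ ∑ a ∈ s, g a := by
  have hcompl : ∑' a : ↥(s : Set α)ᶜ, f a = ∑' a : ↥(s : Set α)ᶜ, g a :=
    tsum_congr fun a => hfg a a.2
  rw [← ENNReal.sum_add_tsum_compl s f, ← ENNReal.sum_add_tsum_compl s g, hcompl] at h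
  rw [← ENNReal.sum_add_tsum_compl s f, hcompl] at hf
  exact (ENNReal.add_le_add_iff_right (ENNReal.add_ne_top.1 hf).2).1 h

theorem IsMinOn.sub_mul_nonneg_of_hasDerivWithinAt {f : ℝ → ℝ} {s : Set ℝ} {c d y : ℝ}
    (hs : Convex ℝ s) (h : IsMinOn f s c) (hf : HasDerivWithinAt f d s c) (hc : c ∈ s)
    (hy : y ∈ s) : 0 ≤ (y - c) * d := by
  simpa [mul_comm] using h.localize.hasFDerivWithinAt_nonneg hf.hasFDerivWithinAt
    (sub_mem_posTangentConeAt_of_segment_subset (hs.segment_subset hc hy))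

theorem Monotone.exists_plateau_start {α : Type*} [LinearOrder α] {w : ℕ → α}
    (hw : Monotone w) {n : ℕ} (hn : w n = w (n + 1)) (h0 : w 0 < w n) :
    ∃ m, w m < w n ∧ w (m + 1) = w n ∧ w (m + 2) = w n := by
  obtain ⟨m, hm, hm1⟩ := Nat.exists_not_and_succ_of_not_zero_of_exists
    (p := fun k => w n ≤ w k) (not_le.2 h0) ⟨n, le_rfl⟩
  have hmn : m < n := hw.reflect_lt (not_le.1 hm)
  exact ⟨m, not_le.1 hm, le_antisymm (hw (by omega)) hm1,
    le_antisymm (hn ▸ hw (by omega)) (hm1.trans (hw (by omega)))⟩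

theorem Monotone.exists_plateau_end {α : Type*} [LinearOrder α] {w : ℕ → α}
    (hw : Monotone w) {n : ℕ} (hn : w n = w (n + 1)) (hk : ∃ k, w n < w k) :
    ∃ m, w m = w n ∧ w (m + 1) = w n ∧ w n < w (m + 2) := by
  obtain ⟨k, hk, hk1⟩ := Nat.exists_not_and_succ_of_not_zero_of_exists
    (p := fun k => w n < w k) (not_lt.2 (hw (Nat.zero_le n))) hk
  have hnk : n + 1 < k + 1 := hw.reflect_lt (hn ▸ hk1)
  obtain ⟨m, rfl⟩ : ∃ m, k = m + 1 := ⟨k - 1, by omega⟩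
  exact ⟨m, le_antisymm (not_lt.1 fun h => hk (h.trans_le (hw (by omega)))) (hw (by omega)),
    le_antisymm (not_lt.1 hk) (hn ▸ hw (by omega)), hk1⟩

/-- Halves `n ↦ u n` (`n : ℕ`) of odd nondecreasing profiles `u : ℤ → [-1, 1]`. -/
def halfProfiles : Set (ℕ → ℝ) := {w | w 0 = 0 ∧ Monotone w ∧ ∀ n, w n ∈ Icc (0 : ℝ) 1}

noncomputable def bondEnergy (W : ℝ → ℝ) (β : ℝ) (w : ℕ → ℝ) (n : ℕ) : ℝ :=
  W (w (n + 1)) + β * (w (n + 1) - w n) ^ 2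

/-- For `W u = Ψ (u ^ 2) - u ^ 2` and the odd profile `u` with half `w`, the energy `𝓔 u` equals
`W 0 + 2 * chainEnergy W β w`. Taking values in `ℝ≥0∞` makes it lower semicontinuous on all of
`ℕ → ℝ`. -/
noncomputable def chainEnergy (W : ℝ → ℝ) (β : ℝ) (w : ℕ → ℝ) : ℝ≥0∞ :=
  ∑' n, ENNReal.ofReal (bondEnergy W β w n)

structure IsChainMinimizer (W : ℝ → ℝ) (β : ℝ) (w : ℕ → ℝ) : Prop where
  mem : w ∈ halfProfiles
  isMinOn : IsMinOn (chainEnergy W β) halfProfiles w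
  ne_top : chainEnergy W β w ≠ ∞

section ChainEnergy

variable {W W' : ℝ → ℝ} {β : ℝ} {w : ℕ → ℝ}

theorem isCompact_halfProfiles : IsCompact halfProfiles := by
  have h : halfProfiles =
      {w | w 0 = 0} ∩ {w | Monotone w} ∩ ⋂ n, (· n) ⁻¹' Icc (0 : ℝ) 1 := by
    ext w; simp [halfProfiles, and_assoc]
  refine (isCompact_univ_pi fun _ => isCompact_Icc).of_isClosed_subset ?_
    fun w hw n _ => hw.2.2 n
  rw [h]
  exact ((isClosed_eq (continuous_apply 0) continuous_const).inter isClosed_monotone).inter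
    (isClosed_iInter fun n => isClosed_Icc.preimage (continuous_apply n))

theorem update_mem_halfProfiles (hw : w ∈ halfProfiles) (m : ℕ) {t : ℝ}
    (ht : t ∈ Icc (w m) (w (m + 2))) : Function.update w (m + 1) t ∈ halfProfiles := by
  obtain ⟨hw0, hmono, hw01⟩ := hw
  refine ⟨by simp [hw0], monotone_nat_of_le_succ fun n => ?_, fun n => ?_⟩
  · simp only [Function.update_apply]
    split_ifs with h1 h2 h2
    · omega
    · subst h1; exact ht.2
    · obtain rfl : n = m := by omega
      exact ht.1
    · exact hmono n.le_succ
  · simp only [Function.update_apply]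
    split_ifs
    · exact ⟨(hw01 m).1.trans ht.1, ht.2.trans (hw01 (m + 2)).2⟩
    · exact hw01 n

theorem exists_chainEnergy_ne_top (hW1 : W 1 = 0) :
    ∃ v ∈ halfProfiles, chainEnergy W β v ≠ ∞ := by
  refine ⟨fun n => if n = 0 then 0 else 1, ⟨rfl, ?_, fun n => ?_⟩, ?_⟩
  · exact monotone_nat_of_le_succ fun n => by split_ifs <;> simp_all
  · dsimp only; split_ifs <;> simp
  · rw [chainEnergy, tsum_eq_single 0 fun n hn => by simp [bondEnergy, hn, hW1]]
    exact ENNReal.ofReal_ne_top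

theorem exists_isChainMinimizer (hW : Continuous W) (hW1 : W 1 = 0) :
    ∃ w, IsChainMinimizer W β w := by
  obtain ⟨v, hv, hv_fin⟩ := exists_chainEnergy_ne_top (β := β) hW1
  have hlsc : LowerSemicontinuous (chainEnergy W β) := lowerSemicontinuous_tsum fun n =>
    (ENNReal.continuous_ofReal.comp (by unfold bondEnergy; fun_prop)).lowerSemicontinuous
  obtain ⟨w, hw, hmin⟩ :=
    (hlsc.lowerSemicontinuousOn _).exists_isMinOn ⟨v, hv⟩ isCompact_halfProfiles
  exact ⟨w, ⟨hw, hmin, ne_top_of_le_ne_top hv_fin (hmin hv)⟩⟩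

namespace IsChainMinimizer

theorem zero (hw : IsChainMinimizer W β w) : w 0 = 0 := hw.mem.1

theorem monotone (hw : IsChainMinimizer W β w) : Monotone w := hw.mem.2.1

theorem mem_Icc (hw : IsChainMinimizer W β w) (n : ℕ) : w n ∈ Icc (0 : ℝ) 1 := hw.mem.2.2 n

theorem isMinOn_bond (hw : IsChainMinimizer W β w) (hβ : 0 ≤ β) (hW : ∀ u, 0 ≤ W u)
    (m : ℕ) :
    IsMinOn (fun t => W t + β * ((t - w m) ^ 2 + (w (m + 2) - t) ^ 2))
      (Icc (w m) (w (m + 2))) (w (m + 1)) := by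
  refine isMinOn_iff.2 fun t ht => ?_
  set v := Function.update w (m + 1) t
  have hbond : ∀ u n, 0 ≤ bondEnergy W β u n := fun u n =>
    add_nonneg (hW _) (mul_nonneg hβ (sq_nonneg _))
  have hle := ENNReal.sum_le_sum_of_tsum_le_tsum (s := {m, m + 1})
    (f := fun n => ENNReal.ofReal (bondEnergy W β w n))
    (g := fun n => ENNReal.ofReal (bondEnergy W β v n)) (fun n hn => ?_)
    (hw.isMinOn (update_mem_halfProfiles hw.mem m ht)) hw.ne_top
  · have hv : v m = w m ∧ v (m + 1) = t ∧ v (m + 2) = w (m + 2) := by simp [v]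
    rw [← ENNReal.ofReal_sum_of_nonneg fun n _ => hbond w n,
      ← ENNReal.ofReal_sum_of_nonneg fun n _ => hbond v n,
      ENNReal.ofReal_le_ofReal_iff (Finset.sum_nonneg fun n _ => hbond v n),
      Finset.sum_pair (by omega), Finset.sum_pair (by omega)] at hle
    simp only [bondEnergy, show m + 1 + 1 = m + 2 from rfl, hv] at hle
    linarith
  · simp only [Finset.mem_insert, Finset.mem_singleton, not_or] at hn
    simp [bondEnergy, v, hn.1, hn.2]

theorem sub_mul_eulerLagrange_nonneg (hw : IsChainMinimizer W β w) (hβ : 0 ≤ β)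
    (hW : ∀ u, 0 ≤ W u) (hW' : ∀ u ∈ Icc (0 : ℝ) 1, HasDerivWithinAt W (W' u) (Icc 0 1) u)
    (m : ℕ) {y : ℝ}
    (hy : y ∈ Icc (w m) (w (m + 2))) :
    0 ≤ (y - w (m + 1)) * (W' (w (m + 1)) - 2 * β * (w m + w (m + 2) - 2 * w (m + 1))) := by
  have hsub : Icc (w m) (w (m + 2)) ⊆ Icc 0 1 :=
    Icc_subset_Icc (hw.mem_Icc m).1 (hw.mem_Icc (m + 2)).2
  have hc : w (m + 1) ∈ Icc (w m) (w (m + 2)) :=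
    ⟨hw.monotone (by omega), hw.monotone (by omega)⟩
  have hquad : HasDerivAt (fun t => β * ((t - w m) ^ 2 + (w (m + 2) - t) ^ 2))
      (β * (2 * (w (m + 1) - w m) - 2 * (w (m + 2) - w (m + 1)))) (w (m + 1)) := by
    refine (((((hasDerivAt_id' _).sub_const (w m)).fun_pow 2).fun_add
      (((hasDerivAt_id' _).const_sub (w (m + 2))).fun_pow 2)).const_mul β).congr_deriv ?_
    push_cast; ring
  refine (hw.isMinOn_bond hβ hW m).sub_mul_nonneg_of_hasDerivWithinAt (convex_Icc _ _) ?_ hc hy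
  exact (((hW' _ (hsub hc)).mono hsub).add hquad.hasDerivWithinAt).congr_deriv (by ring)

theorem lt_one (hw : IsChainMinimizer W β w) (hβ : 0 < β) (hW : ∀ u, 0 ≤ W u)
    (hW' : ∀ u ∈ Icc (0 : ℝ) 1, HasDerivWithinAt W (W' u) (Icc 0 1) u) (hW'1 : W' 1 = 0)
    (n : ℕ) : w n < 1 := by
  by_contra! hn
  obtain ⟨m, hm, hm1⟩ := Nat.exists_not_and_succ_of_not_zero_of_exists
    (p := fun k => 1 ≤ w k) (by simp [hw.zero]) ⟨n, hn⟩
  have h1 : w (m + 1) = 1 := le_antisymm (hw.mem_Icc _).2 hm1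
  have h2 : w (m + 2) = 1 := le_antisymm (hw.mem_Icc _).2 (h1 ▸ hw.monotone (by omega))
  have h := hw.sub_mul_eulerLagrange_nonneg hβ.le hW hW' m
    (left_mem_Icc.2 (hw.monotone (by omega)))
  rw [h1, h2, hW'1] at h
  nlinarith [mul_pos hβ (pow_pos (sub_pos.2 (not_le.1 hm)) 2)]

theorem tendsto_one (hw : IsChainMinimizer W β w) (hβ : 0 ≤ β) (hW : ∀ u, 0 ≤ W u)
    (hWc : Continuous W) (hWpos : ∀ u ∈ Ico (0 : ℝ) 1, 0 < W u) :
    Tendsto w atTop (𝓝 1) := by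
  have hbdd : BddAbove (range w) := ⟨1, by rintro _ ⟨n, rfl⟩; exact (hw.mem_Icc n).2⟩
  have hlim := tendsto_atTop_ciSup hw.monotone hbdd
  have hWlim : Tendsto (fun n => W (w n)) atTop (𝓝 (W (⨆ n, w n))) :=
    (hWc.tendsto _).comp hlim
  have hWzero : Tendsto (fun n => W (w n)) atTop (𝓝 0) := by
    refine (tendsto_add_atTop_iff_nat 1).1 (squeeze_zero (fun n => hW _) (fun n => ?_)
      (ENNReal.summable_toReal hw.ne_top).tendsto_atTop_zero)
    rw [bondEnergy, ENNReal.toReal_ofReal (add_nonneg (hW _) (mul_nonneg hβ (sq_nonneg _)))]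
    exact le_add_of_nonneg_right (mul_nonneg hβ (sq_nonneg _))
  have hsup : (⨆ n, w n) ∈ Icc (0 : ℝ) 1 :=
    ⟨(hw.mem_Icc 0).1.trans (le_ciSup hbdd 0), ciSup_le fun n => (hw.mem_Icc n).2⟩
  obtain hlt | heq := hsup.2.lt_or_eq
  · exact absurd (tendsto_nhds_unique hWlim hWzero) (hWpos _ ⟨hsup.1, hlt⟩).ne'
  · rwa [heq] at hlim

theorem strictMono (hw : IsChainMinimizer W β w) (hβ : 0 < β) (hW : ∀ u, 0 ≤ W u)
    (hW' : ∀ u ∈ Icc (0 : ℝ) 1, HasDerivWithinAt W (W' u) (Icc 0 1) u) (hW'0 : W' 0 = 0)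
    (hlt : ∀ n, w n < 1) (hlim : Tendsto w atTop (𝓝 1)) : StrictMono w := by
  refine strictMono_nat_of_lt_succ fun n => (hw.monotone n.le_succ).lt_of_ne fun hn => ?_
  obtain ⟨k, hk, hk1, hk2⟩ :=
    hw.monotone.exists_plateau_end hn ((hlim.eventually_const_lt (hlt n)).exists)
  have hright := hw.sub_mul_eulerLagrange_nonneg hβ.le hW hW' k
    (right_mem_Icc.2 (hw.monotone (by omega)))
  rw [hk, hk1] at hright
  have hpos : 0 < W' (w n) := by
    nlinarith [nonneg_of_mul_nonneg_right hright (sub_pos.2 hk2), mul_pos hβ (sub_pos.2 hk2)]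
  obtain h0 | h0 := (hw.mem_Icc n).1.eq_or_lt
  · rw [← h0, hW'0] at hpos
    exact hpos.false
  obtain ⟨m, hm, hm1, hm2⟩ := hw.monotone.exists_plateau_start hn (hw.zero ▸ h0)
  have hleft := hw.sub_mul_eulerLagrange_nonneg hβ.le hW hW' m
    (left_mem_Icc.2 (hw.monotone (by omega)))
  rw [hm1, hm2] at hleft
  nlinarith [nonpos_of_mul_nonneg_right hleft (sub_neg.2 hm), mul_pos hβ (sub_pos.2 hm)]

theorem eulerLagrange (hw : IsChainMinimizer W β w) (hβ : 0 ≤ β) (hW : ∀ u, 0 ≤ W u)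
    (hW' : ∀ u ∈ Icc (0 : ℝ) 1, HasDerivWithinAt W (W' u) (Icc 0 1) u) (hmono : StrictMono w)
    (m : ℕ) : W' (w (m + 1)) = 2 * β * (w m + w (m + 2) - 2 * w (m + 1)) := by
  have hc : w m < w (m + 1) ∧ w (m + 1) < w (m + 2) := ⟨hmono (by omega), hmono (by omega)⟩
  have hleft := nonpos_of_mul_nonneg_right
    (hw.sub_mul_eulerLagrange_nonneg hβ hW hW' m (left_mem_Icc.2 (hc.1.trans hc.2).le))
    (sub_neg.2 hc.1)
  have hright := nonneg_of_mul_nonneg_right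
    (hw.sub_mul_eulerLagrange_nonneg hβ hW hW' m (right_mem_Icc.2 (hc.1.trans hc.2).le))
    (sub_pos.2 hc.2)
  linarith

end IsChainMinimizer

theorem exists_strictMono_chain_solution (hβ : 0 < β) (hWc : Continuous W)
    (hW : ∀ u, 0 ≤ W u) (hWpos : ∀ u ∈ Ico (0 : ℝ) 1, 0 < W u) (hW1 : W 1 = 0)
    (hW' : ∀ u ∈ Icc (0 : ℝ) 1, HasDerivWithinAt W (W' u) (Icc 0 1) u) (hW'0 : W' 0 = 0)
    (hW'1 : W' 1 = 0) :
    ∃ w : ℕ → ℝ, w 0 = 0 ∧ StrictMono w ∧ (∀ n, w n < 1) ∧ Tendsto w atTop (𝓝 1) ∧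
      ∀ m, W' (w (m + 1)) = 2 * β * (w m + w (m + 2) - 2 * w (m + 1)) := by
  obtain ⟨w, hw⟩ := exists_isChainMinimizer (β := β) hWc hW1
  have hlt := hw.lt_one hβ hW hW' hW'1
  have hlim := hw.tendsto_one hβ.le hW hWc hWpos
  have hmono := hw.strictMono hβ hW hW' hW'0 hlt hlim
  exact ⟨w, hw.zero, hmono, hlt, hlim, hw.eulerLagrange hβ.le hW hW' hmono⟩

end ChainEnergy

/-- `Ψ (u ^ 2) - u ^ 2`, with `u ^ 2` truncated at `1` so that `Ψ` is only used on `[0, 1]`. -/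
noncomputable def dnlsPotential (Ψ : ℝ → ℝ) (u : ℝ) : ℝ := Ψ (min (u ^ 2) 1) - min (u ^ 2) 1

section DnlsPotential

variable {Ψ : ℝ → ℝ}

theorem dnlsPotential_of_mem_Icc {u : ℝ} (hu : u ∈ Icc (0 : ℝ) 1) :
    dnlsPotential Ψ u = Ψ (u ^ 2) - u ^ 2 := by
  rw [dnlsPotential, min_eq_left (pow_le_one₀ hu.1 hu.2)]

theorem min_sq_one_mem_Icc (u : ℝ) : min (u ^ 2) 1 ∈ Icc (0 : ℝ) 1 :=
  ⟨le_min (sq_nonneg u) zero_le_one, min_le_right _ _⟩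

theorem continuous_dnlsPotential (hΨ : ContinuousOn Ψ (Icc 0 1)) :
    Continuous (dnlsPotential Ψ) := by
  have h : Continuous fun u : ℝ => min (u ^ 2) 1 := by fun_prop
  exact (hΨ.comp_continuous h min_sq_one_mem_Icc).sub h

theorem dnlsPotential_nonneg (hΨ1 : Ψ 1 = 1) (hΨx : ∀ x ∈ Ico (0 : ℝ) 1, x < Ψ x) (u : ℝ) :
    0 ≤ dnlsPotential Ψ u := by
  obtain ⟨h0, h1⟩ := min_sq_one_mem_Icc u
  rw [dnlsPotential, sub_nonneg]
  obtain h | h := h1.lt_or_eq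
  · exact (hΨx _ ⟨h0, h⟩).le
  · rw [h, hΨ1]

theorem dnlsPotential_pos (hΨx : ∀ x ∈ Ico (0 : ℝ) 1, x < Ψ x) {u : ℝ}
    (hu : u ∈ Ico (0 : ℝ) 1) :
    0 < dnlsPotential Ψ u := by
  rw [dnlsPotential_of_mem_Icc (Ico_subset_Icc_self hu), sub_pos]
  exact hΨx _ ⟨sq_nonneg u, pow_lt_one₀ hu.1 hu.2 two_ne_zero⟩

theorem dnlsPotential_one (hΨ1 : Ψ 1 = 1) : dnlsPotential Ψ 1 = 0 := by
  simp [dnlsPotential, hΨ1]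

theorem hasDerivWithinAt_dnlsPotential (hΨ : DifferentiableOn ℝ Ψ (Icc 0 1)) {u : ℝ}
    (hu : u ∈ Icc (0 : ℝ) 1) :
    HasDerivWithinAt (dnlsPotential Ψ) (2 * (derivWithin Ψ (Icc 0 1) (u ^ 2) * u - u))
      (Icc 0 1) u := by
  have hsq : MapsTo (fun x : ℝ => x ^ 2) (Icc 0 1) (Icc 0 1) :=
    fun x hx => ⟨sq_nonneg x, pow_le_one₀ hx.1 hx.2⟩
  have hΨu : HasDerivWithinAt Ψ (derivWithin Ψ (Icc 0 1) (u ^ 2)) (Icc 0 1) (u ^ 2) :=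
    (hΨ _ (hsq hu)).hasDerivWithinAt
  have hcomp := HasDerivWithinAt.comp (h := fun x : ℝ => x ^ 2) u hΨu
    (hasDerivAt_pow 2 u).hasDerivWithinAt hsq
  refine ((hcomp.sub (hasDerivAt_pow 2 u).hasDerivWithinAt).congr
    (fun x hx => dnlsPotential_of_mem_Icc hx) (dnlsPotential_of_mem_Icc hu)).congr_deriv ?_
  push_cast; ring

end DnlsPotential

noncomputable def oddExtension (w : ℕ → ℝ) (j : ℤ) : ℝ := j.sign * w j.natAbs

section OddExtension

variable {w : ℕ → ℝ}

theorem oddExtension_neg (w : ℕ → ℝ) (j : ℤ) : oddExtension w (-j) = -oddExtension w j := by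
  simp [oddExtension, Int.sign_neg]

theorem oddExtension_natCast (hw0 : w 0 = 0) (n : ℕ) : oddExtension w n = w n := by
  rcases n with _ | n
  · simp [oddExtension, hw0]
  · rw [oddExtension, Int.natAbs_natCast, Int.sign_eq_one_of_pos (by omega), Int.cast_one,
      one_mul]

theorem abs_oddExtension (hw0 : w 0 = 0) (j : ℤ) : |oddExtension w j| = |w j.natAbs| := by
  obtain ⟨n, rfl | rfl⟩ := Int.eq_nat_or_neg j
  · rw [oddExtension_natCast hw0, Int.natAbs_natCast]
  · rw [oddExtension_neg, abs_neg, oddExtension_natCast hw0, Int.natAbs_neg, Int.natAbs_natCast]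

theorem strictMono_oddExtension (hw0 : w 0 = 0) (hw : StrictMono w) :
    StrictMono (oddExtension w) := by
  refine strictMono_int_of_lt_succ fun j => ?_
  obtain ⟨n, rfl | rfl⟩ := Int.eq_nat_or_neg j
  · rw [← Nat.cast_add_one, oddExtension_natCast hw0, oddExtension_natCast hw0]
    exact hw n.lt_succ_self
  · rcases n with _ | k
    · rw [Nat.cast_zero, neg_zero, zero_add, ← Nat.cast_one, ← Nat.cast_zero,
        oddExtension_natCast hw0, oddExtension_natCast hw0]
      exact hw zero_lt_one
    · rw [show -((k + 1 : ℕ) : ℤ) + 1 = -(k : ℤ) by push_cast; ring, oddExtension_neg,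
        oddExtension_neg, oddExtension_natCast hw0, oddExtension_natCast hw0, neg_lt_neg_iff]
      exact hw k.lt_succ_self

theorem tendsto_oddExtension_atTop (hw0 : w 0 = 0) {a : ℝ} (h : Tendsto w atTop (𝓝 a)) :
    Tendsto (oddExtension w) atTop (𝓝 a) := by
  rw [← Nat.map_cast_int_atTop, tendsto_map'_iff]
  exact h.congr fun n => (oddExtension_natCast hw0 n).symm

theorem tendsto_oddExtension_atBot (hw0 : w 0 = 0) {a : ℝ} (h : Tendsto w atTop (𝓝 a)) :
    Tendsto (oddExtension w) atBot (𝓝 (-a)) := by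
  refine (((tendsto_oddExtension_atTop hw0 h).comp tendsto_neg_atBot_atTop).neg).congr
    fun j => ?_
  simp [oddExtension_neg]

theorem oddExtension_discrete_eq (hw0 : w 0 = 0) {G : ℝ → ℝ} (hG : ∀ x, G (-x) = -G x)
    {β : ℝ} (h : ∀ m : ℕ, G (w (m + 1)) = β * (w (m + 2) + w m - 2 * w (m + 1))) (j : ℤ) :
    G (oddExtension w j) =
      β * (oddExtension w (j + 1) + oddExtension w (j - 1) - 2 * oddExtension w j) := by
  have hnat : ∀ n : ℕ, G (oddExtension w n) =
      β * (oddExtension w (n + 1) + oddExtension w (n - 1) - 2 * oddExtension w n) := by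
    rintro (_ | m)
    · have hG0 : G 0 = 0 := by linarith [neg_zero (G := ℝ) ▸ hG 0]
      have h0 : oddExtension w 0 = 0 := by simp [oddExtension]
      have h1 : oddExtension w 1 = w 1 := by simpa using oddExtension_natCast hw0 1
      simp [oddExtension_neg, h0, h1, hG0]
    · rw [show ((m + 1 : ℕ) : ℤ) + 1 = ((m + 2 : ℕ) : ℤ) by push_cast; ring,
        show ((m + 1 : ℕ) : ℤ) - 1 = (m : ℤ) by push_cast; ring, oddExtension_natCast hw0,
        oddExtension_natCast hw0, oddExtension_natCast hw0]
      exact h m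
  obtain ⟨n, rfl | rfl⟩ := Int.eq_nat_or_neg j
  · exact hnat n
  · rw [show -(n : ℤ) + 1 = -((n : ℤ) - 1) by ring, show -(n : ℤ) - 1 = -((n : ℤ) + 1) by ring,
      oddExtension_neg, oddExtension_neg, oddExtension_neg, hG, hnat n]
    ring

end OddExtension

theorem stmt6_general (Ψ : ℝ → ℝ) (β : ℝ) (hβ : 0 < β)
    (hΨ : ContDiffOn ℝ 2 Ψ (Set.Icc (0 : ℝ) 1))
    (hΨ1 : Ψ 1 = 1) (hΨ'1 : derivWithin Ψ (Set.Icc (0 : ℝ) 1) 1 = 1)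
    (hΨx : ∀ x ∈ Set.Ico (0 : ℝ) 1, x < Ψ x) :
    ∃ u : ℤ → ℝ,
      (∀ j, u (-j) = - u j) ∧ StrictMono u ∧ (∀ j, u j ∈ Set.Ioo (-1 : ℝ) 1) ∧
      Tendsto u atTop (nhds 1) ∧ Tendsto u atBot (nhds (-1)) ∧
      ∀ j : ℤ, derivWithin Ψ (Set.Icc (0 : ℝ) 1) (u j ^ 2) * u j - u j =
        β * (u (j + 1) + u (j - 1) - 2 * u j) := by
  obtain ⟨w, hw0, hmono, hlt, hlim, hEL⟩ :=
    exists_strictMono_chain_solution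
      (W' := fun u => 2 * (derivWithin Ψ (Icc 0 1) (u ^ 2) * u - u)) hβ
      (continuous_dnlsPotential hΨ.continuousOn) (dnlsPotential_nonneg hΨ1 hΨx)
      (fun _ => dnlsPotential_pos hΨx) (dnlsPotential_one hΨ1)
      (fun _ => hasDerivWithinAt_dnlsPotential (hΨ.differentiableOn (by norm_num)))
      (by simp) (by simp [hΨ'1])
  have habs : ∀ n, |w n| < 1 := fun n =>
    abs_lt.2 ⟨by linarith [hw0 ▸ hmono.monotone n.zero_le], hlt n⟩
  refine ⟨oddExtension w, oddExtension_neg w, strictMono_oddExtension hw0 hmono,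
    fun j => abs_lt.1 ((abs_oddExtension hw0 j).trans_lt (habs _)),
    tendsto_oddExtension_atTop hw0 hlim, tendsto_oddExtension_atBot hw0 hlim,
    oddExtension_discrete_eq (G := fun x => derivWithin Ψ (Icc 0 1) (x ^ 2) * x - x) hw0
      (fun x => by simp only [neg_sq]; ring) fun m => ?_⟩
  linarith [hEL m]

/-- existence of heteroclinic standing waves with odd, strictly
increasing profile for the normalized defocussing DNLS equation. -/
theorem stmt6 (Ψ : ℝ → ℝ) (β : ℝ) (hβ : 0 < β)
    (hΨ : ContDiffOn ℝ 2 Ψ (Set.Icc (0 : ℝ) 1))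
    (hΨ1 : Ψ 1 = 1) (hΨ'1 : derivWithin Ψ (Set.Icc (0 : ℝ) 1) 1 = 1)
    (hΨ''1 : 0 < derivWithin (derivWithin Ψ (Set.Icc (0 : ℝ) 1)) (Set.Icc (0 : ℝ) 1) 1)
    (hΨx : ∀ x ∈ Set.Ico (0 : ℝ) 1, x < Ψ x) :
    ∃ u : ℤ → ℝ,
      (∀ j, u (-j) = - u j) ∧ StrictMono u ∧ (∀ j, u j ∈ Set.Ioo (-1 : ℝ) 1) ∧
      Tendsto u atTop (nhds 1) ∧ Tendsto u atBot (nhds (-1)) ∧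
      ∀ j : ℤ, derivWithin Ψ (Set.Icc (0 : ℝ) 1) (u j ^ 2) * u j - u j =
        β * (u (j + 1) + u (j - 1) - 2 * u j) :=
  stmt6_general Ψ β hβ hΨ hΨ1 hΨ'1 hΨx
end

section
/- Let $u : \mathbb{Z} \to (-1,1)$ be strictly increasing, odd, with $u_j \to 1$ as $j \to \infty$, solving $F'(u_j) = 2\beta(u_{j+1}+u_{j-1}-2u_j)$ where $F \in C^2$, $F(1) = F'(1) = 0$, $F''(1) > 0$, and $\beta > 0$. Let $\lambda > 0$ be the unique positive solution of $4\beta(\cosh\lambda - 1) = F''(1)$. Then for any $0 < \underline{\lambda} < \lambda < \overline{\lambda}$ there exist constants $\underline{c}, \overline{c} > 0$ such that $\underline{c}\, e^{-\overline{\lambda}|j|} \leq |\mathrm{sgn}(j) - u_j| \leq \overline{c}\, e^{-\underline{\lambda}|j|}$ for all $j \in \mathbb{Z}$. -/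
open Filter

/-- sign of an integer index: `1` for `j ≥ 0`, `-1` for `j < 0`. -/
noncomputable def sgnZ (j : ℤ) : ℝ := if 0 ≤ j then 1 else -1

open Set Topology

/-!
Put `v j = 1 - u j`. Since `F'(u j) = -(slope of F' between u j and 1) * v j`, the equation becomes
the linear recurrence `v (j+1) + v (j-1) = a j * v j` with `a j → 2 + F''(1)/(2β) = 2 cosh λ`.
The ratios `κ j = v (j+1) / v j ∈ (0, 1)` obey the Riccati recursion `κ (j+1) = a (j+1) - 1/κ j`.
Once `a ≥ r + 1/r` with `r = exp (-λ₁) < 1`, a value `κ j > r` would make `κ - r` grow at least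
geometrically with ratio `1/r`, contradicting `κ < 1`; symmetrically `κ ≥ exp (-λ₂)` eventually.
Multiplying the ratios gives both exponential bounds for `j ≥ 0`, and oddness gives them for `j < 0`.
-/

lemma not_bddAbove_range_of_geometric_growth {d : ℕ → ℝ} {c : ℝ} (hc : 1 < c) (h0 : 0 < d 0)
    (hstep : ∀ n, 0 < d n → c * d n ≤ d (n + 1)) : ¬ BddAbove (range d) := by
  have hpow : ∀ n, c ^ n * d 0 ≤ d n := by
    intro n
    induction n with
    | zero => simp
    | succ n ih =>
      have hpos : 0 < d n := (mul_pos (pow_pos (by linarith) n) h0).trans_le ih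
      calc c ^ (n + 1) * d 0 = c * (c ^ n * d 0) := by ring
        _ ≤ c * d n := by gcongr
        _ ≤ d (n + 1) := hstep n hpos
  rintro ⟨B, hB⟩
  obtain ⟨n, hn⟩ := pow_unbounded_of_one_lt (B / d 0) hc
  rw [div_lt_iff₀ h0] at hn
  linarith [hpow n, hB (mem_range_self n)]

lemma inv_mul_sub_le_inv_sub_inv {x y : ℝ} (hx : 0 < x) (hxy : x ≤ y) (hy : y ≤ 1) :
    x⁻¹ * (y - x) ≤ x⁻¹ - y⁻¹ ∧ y⁻¹ * (y - x) ≤ x⁻¹ - y⁻¹ := by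
  have hy0 : 0 < y := hx.trans_le hxy
  rw [inv_sub_inv hx.ne' hy0.ne', inv_mul_eq_div, inv_mul_eq_div]
  constructor <;> apply div_le_div_of_nonneg_left (sub_nonneg.2 hxy) (by positivity) <;> nlinarith

section Riccati

variable {κ a : ℕ → ℝ} {N : ℕ}

lemma riccati_le_of_add_inv_le {r : ℝ} (hr0 : 0 < r) (hr1 : r < 1)
    (hκ : ∀ n, κ n ∈ Ioo (0 : ℝ) 1) (hrec : ∀ n, κ (n + 1) = a (n + 1) - (κ n)⁻¹)
    (ha : ∀ n ≥ N, r + r⁻¹ ≤ a n) : ∀ n ≥ N, κ n ≤ r := by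
  intro m hm
  by_contra! hlt
  refine not_bddAbove_range_of_geometric_growth (d := fun k => κ (m + k) - r)
    (one_lt_inv₀ hr0 |>.2 hr1) (by simpa using hlt) (fun k hk => ?_) ⟨1, ?_⟩
  · have := (inv_mul_sub_le_inv_sub_inv hr0 (sub_pos.1 hk).le (hκ (m + k)).2.le).1
    simp only [← add_assoc, hrec]
    linarith [ha (m + k + 1) (by omega)]
  · rintro _ ⟨k, rfl⟩
    linarith [(hκ (m + k)).2]

lemma le_riccati_of_le_add_inv {s : ℝ} (hs0 : 0 < s) (hs1 : s < 1)
    (hκ : ∀ n, κ n ∈ Ioo (0 : ℝ) 1) (hrec : ∀ n, κ (n + 1) = a (n + 1) - (κ n)⁻¹)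
    (ha : ∀ n ≥ N, a n ≤ s + s⁻¹) : ∀ n ≥ N, s ≤ κ n := by
  intro m hm
  by_contra! hlt
  refine not_bddAbove_range_of_geometric_growth (d := fun k => s - κ (m + k))
    (one_lt_inv₀ hs0 |>.2 hs1) (by simpa using hlt) (fun k hk => ?_) ⟨s, ?_⟩
  · have := (inv_mul_sub_le_inv_sub_inv (hκ (m + k)).1 (sub_pos.1 hk).le hs1.le).2
    simp only [← add_assoc, hrec]
    linarith [ha (m + k + 1) (by omega)]
  · rintro _ ⟨k, rfl⟩
    linarith [(hκ (m + k)).1]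

end Riccati

lemma mul_pow_le_mul_pow_of_le_mul {v : ℕ → ℝ} {r : ℝ} {N : ℕ} (hr : 0 ≤ r)
    (hstep : ∀ n ≥ N, v (n + 1) ≤ r * v n) : ∀ n ≥ N, v n * r ^ N ≤ v N * r ^ n := by
  intro n hn
  induction n, hn using Nat.le_induction with
  | base => exact le_rfl
  | succ n hn ih =>
    calc v (n + 1) * r ^ N ≤ r * (v n * r ^ N) := by
          rw [← mul_assoc]; gcongr; exact hstep n hn
      _ ≤ r * (v N * r ^ n) := by gcongr
      _ = v N * r ^ (n + 1) := by ring

section Recurrence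

variable {v a : ℕ → ℝ}

lemma succ_div_mem_Ioo (hv : ∀ n, 0 < v n) (hanti : StrictAnti v) (n : ℕ) :
    v (n + 1) / v n ∈ Ioo (0 : ℝ) 1 :=
  ⟨div_pos (hv _) (hv _), (div_lt_one (hv n)).2 (hanti n.lt_succ_self)⟩

lemma succ_div_eq_sub_inv (hv : ∀ n, 0 < v n)
    (hrec : ∀ n, v (n + 2) + v n = a (n + 1) * v (n + 1)) (n : ℕ) :
    v (n + 2) / v (n + 1) = a (n + 1) - (v (n + 1) / v n)⁻¹ := by
  rw [inv_div, eq_sub_iff_add_eq, ← add_div, div_eq_iff (hv _).ne', hrec]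

lemma exists_le_mul_pow_of_tendsto {A r : ℝ} (hv : ∀ n, 0 < v n) (hanti : StrictAnti v)
    (hrec : ∀ n, v (n + 2) + v n = a (n + 1) * v (n + 1)) (hA : Tendsto a atTop (𝓝 A))
    (hr0 : 0 < r) (hr1 : r < 1) (hrA : r + r⁻¹ < A) : ∃ C > 0, ∀ n, v n ≤ C * r ^ n := by
  obtain ⟨N, hN⟩ := eventually_atTop.1 (hA.eventually (eventually_ge_nhds hrA))
  have hκ := riccati_le_of_add_inv_le hr0 hr1 (succ_div_mem_Ioo hv hanti)
    (succ_div_eq_sub_inv hv hrec) hN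
  have hstep : ∀ n ≥ N, v (n + 1) ≤ r * v n := fun n hn => by
    have := hκ n hn
    rw [div_le_iff₀ (hv n)] at this
    linarith
  refine ⟨v 0 / r ^ N, by have := hv 0; positivity, fun n => ?_⟩
  rw [div_mul_eq_mul_div, le_div_iff₀ (by positivity)]
  rcases le_or_gt N n with hn | hn
  · calc v n * r ^ N ≤ v N * r ^ n := mul_pow_le_mul_pow_of_le_mul hr0.le hstep n hn
      _ ≤ v 0 * r ^ n := by gcongr; exact hanti.antitone (Nat.zero_le N)
  · calc v n * r ^ N ≤ v 0 * r ^ N := by gcongr; exact hanti.antitone (Nat.zero_le n)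
      _ ≤ v 0 * r ^ n :=
          mul_le_mul_of_nonneg_left (pow_le_pow_of_le_one hr0.le hr1.le hn.le) (hv 0).le

lemma exists_mul_pow_le_of_tendsto {A s : ℝ} (hv : ∀ n, 0 < v n) (hanti : StrictAnti v)
    (hrec : ∀ n, v (n + 2) + v n = a (n + 1) * v (n + 1)) (hA : Tendsto a atTop (𝓝 A))
    (hs0 : 0 < s) (hs1 : s < 1) (hsA : A < s + s⁻¹) : ∃ c > 0, ∀ n, c * s ^ n ≤ v n := by
  obtain ⟨N, hN⟩ := eventually_atTop.1 (hA.eventually (eventually_le_nhds hsA))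
  have hκ := le_riccati_of_le_add_inv hs0 hs1 (succ_div_mem_Ioo hv hanti)
    (succ_div_eq_sub_inv hv hrec) hN
  have hstep : ∀ n ≥ N, -v (n + 1) ≤ s * -v n := fun n hn => by
    have := hκ n hn
    rw [le_div_iff₀ (hv n)] at this
    linarith
  refine ⟨v N, hv N, fun n => ?_⟩
  rcases le_or_gt N n with hn | hn
  · have := mul_pow_le_mul_pow_of_le_mul (v := fun n => -v n) hs0.le hstep n hn
    have := hv n
    have : s ^ N ≤ 1 := pow_le_one₀ hs0.le hs1.le
    nlinarith
  · calc v N * s ^ n ≤ v N := mul_le_of_le_one_right (hv N).le (pow_le_one₀ hs0.le hs1.le)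
      _ ≤ v n := hanti.antitone hn.le

lemma exp_neg_add_inv_exp_neg (x : ℝ) : Real.exp (-x) + (Real.exp (-x))⁻¹ = 2 * Real.cosh x := by
  rw [Real.cosh_eq, Real.exp_neg, inv_inv]; ring

lemma exp_decay_of_tendsto_cosh {lam lam₁ lam₂ : ℝ} (hv : ∀ n, 0 < v n) (hanti : StrictAnti v)
    (hrec : ∀ n, v (n + 2) + v n = a (n + 1) * v (n + 1))
    (hA : Tendsto a atTop (𝓝 (2 * Real.cosh lam)))
    (hlam₁ : 0 < lam₁) (hlt₁ : lam₁ < lam) (hlt₂ : lam < lam₂) :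
    ∃ c₁ > 0, ∃ c₂ > 0, ∀ n : ℕ,
      c₁ * Real.exp (-lam₂ * n) ≤ v n ∧ v n ≤ c₂ * Real.exp (-lam₁ * n) := by
  have hcosh {x y : ℝ} (hx : 0 < x) (hxy : x < y) : 2 * Real.cosh x < 2 * Real.cosh y := by
    rw [mul_lt_mul_iff_right₀ two_pos, Real.cosh_lt_cosh, abs_of_pos hx, abs_of_pos (hx.trans hxy)]
    exact hxy
  have hexp {x : ℝ} (hx : 0 < x) : Real.exp (-x) < 1 := Real.exp_lt_one_iff.2 (neg_neg_of_pos hx)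
  have hlam : 0 < lam := hlam₁.trans hlt₁
  obtain ⟨C, hC, hup⟩ := exists_le_mul_pow_of_tendsto hv hanti hrec hA (Real.exp_pos _)
    (hexp hlam₁) (by rw [exp_neg_add_inv_exp_neg]; exact hcosh hlam₁ hlt₁)
  obtain ⟨c, hc, hlo⟩ := exists_mul_pow_le_of_tendsto hv hanti hrec hA (Real.exp_pos _)
    (hexp (hlam.trans hlt₂)) (by rw [exp_neg_add_inv_exp_neg]; exact hcosh hlam hlt₂)
  refine ⟨c, hc, C, hC, fun n => ?_⟩
  simp only [mul_comm _ (n : ℝ), Real.exp_nat_mul] at *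
  exact ⟨hlo n, hup n⟩

end Recurrence

lemma tendsto_slope_deriv_of_contDiff_two {F : ℝ → ℝ} (hF : ContDiff ℝ 2 F) {y : ℝ}
    {ι : Type*} {l : Filter ι} {x : ι → ℝ} (hx : Tendsto x l (𝓝 y)) (hne : ∀ i, x i ≠ y) :
    Tendsto (fun i => slope (deriv F) y (x i)) l (𝓝 (deriv (deriv F) y)) := by
  have hF' : ContDiff ℝ 1 (deriv F) := (contDiff_succ_iff_deriv.mp hF).2.2
  refine (hasDerivAt_iff_tendsto_slope.mp ((hF'.differentiable one_ne_zero) y).hasDerivAt).comp ?_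
  exact tendsto_nhdsWithin_iff.2 ⟨hx, Eventually.of_forall hne⟩

lemma one_sub_add_one_sub_eq_mul {F : ℝ → ℝ} {β : ℝ} (hβ : β ≠ 0) (hF'1 : deriv F 1 = 0)
    {u : ℤ → ℝ} (heq : ∀ j : ℤ, deriv F (u j) = 2 * β * (u (j + 1) + u (j - 1) - 2 * u j))
    {j : ℤ} (hj : u j ≠ 1) :
    (1 - u (j + 1)) + (1 - u (j - 1)) = (2 + slope (deriv F) 1 (u j) / (2 * β)) * (1 - u j) := by
  have : u j - 1 ≠ 0 := sub_ne_zero.2 hj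
  rw [slope_def_field, hF'1]
  field_simp
  linear_combination (u j - 1) * heq j

lemma abs_sgnZ_sub_eq {u : ℤ → ℝ} (hodd : ∀ j, u (-j) = - u j) (hlt : ∀ j, u j < 1) (j : ℤ) :
    |sgnZ j - u j| = 1 - u j.natAbs := by
  rcases le_or_gt 0 j with hj | hj
  · rw [sgnZ, if_pos hj, Int.natAbs_of_nonneg hj, abs_of_pos (sub_pos.2 (hlt j))]
  · rw [sgnZ, if_neg hj.not_ge, Int.ofNat_natAbs_of_nonpos hj.le, hodd,
      abs_of_neg (by linarith [hlt (-j), hodd j])]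
    ring

theorem stmt7_general (F : ℝ → ℝ) (β : ℝ) (hβ : 0 < β)
    (hF : ContDiff ℝ 2 F)
    (hF'1 : deriv F 1 = 0)
    (u : ℤ → ℝ) (hmono : StrictMono u)
    (hodd : ∀ j, u (-j) = - u j)
    (hval : ∀ j, u j ∈ Set.Ioo (-1 : ℝ) 1)
    (hlim : Tendsto u atTop (nhds 1))
    (heq : ∀ j : ℤ, deriv F (u j) = 2 * β * (u (j + 1) + u (j - 1) - 2 * u j))
    (lam : ℝ)
    (hlameq : 4 * β * (Real.cosh lam - 1) = deriv (deriv F) 1) :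
    ∀ lam₁ lam₂ : ℝ, 0 < lam₁ → lam₁ < lam → lam < lam₂ →
      ∃ c₁ > (0 : ℝ), ∃ c₂ > (0 : ℝ), ∀ j : ℤ,
        c₁ * Real.exp (-lam₂ * |(j : ℝ)|) ≤ |sgnZ j - u j| ∧
        |sgnZ j - u j| ≤ c₂ * Real.exp (-lam₁ * |(j : ℝ)|) := by
  intro lam₁ lam₂ hlam₁ hlt₁ hlt₂
  have hlt1 : ∀ j, u j < 1 := fun j => (hval j).2
  have hcoeff : 2 + deriv (deriv F) 1 / (2 * β) = 2 * Real.cosh lam := by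
    rw [← hlameq]; field_simp; ring
  have hA : Tendsto (fun n : ℕ => 2 + slope (deriv F) 1 (u n) / (2 * β)) atTop
      (𝓝 (2 * Real.cosh lam)) := hcoeff ▸ tendsto_const_nhds.add
        ((tendsto_slope_deriv_of_contDiff_two hF (hlim.comp tendsto_natCast_atTop_atTop)
          fun n => (hlt1 n).ne).div_const _)
  have hrec (n : ℕ) : (1 - u (n + 2 : ℕ)) + (1 - u n) =
      (2 + slope (deriv F) 1 (u (n + 1 : ℕ)) / (2 * β)) * (1 - u (n + 1 : ℕ)) := by
    have := one_sub_add_one_sub_eq_mul hβ.ne' hF'1 heq (hlt1 (n + 1)).ne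
    rwa [add_sub_cancel_right, add_assoc, one_add_one_eq_two] at this
  obtain ⟨c₁, hc₁, c₂, hc₂, hbound⟩ := exp_decay_of_tendsto_cosh (v := fun n : ℕ => 1 - u n)
    (fun n => sub_pos.2 (hlt1 n)) (fun m n hmn => by simpa using hmono (Nat.cast_lt.2 hmn))
    hrec hA hlam₁ hlt₁ hlt₂
  refine ⟨c₁, hc₁, c₂, hc₂, fun j => ?_⟩
  rw [abs_sgnZ_sub_eq hodd hlt1, ← Int.cast_abs, ← Nat.cast_natAbs]
  exact hbound j.natAbs

/-- exponential decay of heteroclinic standing wave profiles towards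
their asymptotic states, with rate determined by `4β(cosh λ - 1) = F''(1)`. -/
theorem stmt7 (F : ℝ → ℝ) (β : ℝ) (hβ : 0 < β)
    (hF : ContDiff ℝ 2 F)
    (hF1 : F 1 = 0) (hF'1 : deriv F 1 = 0) (hF''1 : 0 < deriv (deriv F) 1)
    (u : ℤ → ℝ) (hmono : StrictMono u)
    (hodd : ∀ j, u (-j) = - u j)
    (hval : ∀ j, u j ∈ Set.Ioo (-1 : ℝ) 1)
    (hlim : Tendsto u atTop (nhds 1))
    (heq : ∀ j : ℤ, deriv F (u j) = 2 * β * (u (j + 1) + u (j - 1) - 2 * u j))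
    (lam : ℝ) (hlam : 0 < lam)
    (hlameq : 4 * β * (Real.cosh lam - 1) = deriv (deriv F) 1) :
    ∀ lam₁ lam₂ : ℝ, 0 < lam₁ → lam₁ < lam → lam < lam₂ →
      ∃ c₁ > (0 : ℝ), ∃ c₂ > (0 : ℝ), ∀ j : ℤ,
        c₁ * Real.exp (-lam₂ * |(j : ℝ)|) ≤ |sgnZ j - u j| ∧
        |sgnZ j - u j| ≤ c₂ * Real.exp (-lam₁ * |(j : ℝ)|) :=
  stmt7_general F β hβ hF hF'1 u hmono hodd hval hlim heq lam hlameq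
end

section
/- Let $F:[-1,1]\to[0,\infty)$ be continuous with $F>0$ on $(-1,1)$, $F(\pm1)=0$, $\beta>0$, and let $\mathcal{M}_N = \{u \in \mathcal{M} : u_j = \mathrm{sgn}(j) \text{ for } |j| > N\}$. Then $\min_{\mathcal{M}_N} \mathcal{E} \to \min_{\mathcal{M}} \mathcal{E}$ as $N \to \infty$, and the sequence $N \mapsto \min_{\mathcal{M}_N}\mathcal{E}$ is nonincreasing. -/
open Filter
open scoped ENNReal

/-- the Ritz set `𝓜_N` of profiles agreeing with the shock profile for `|j| > N`. -/
noncomputable def IsMN (N : ℕ) (u : ℤ → ℝ) : Prop :=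
  IsM u ∧ ∀ j : ℤ, (N : ℤ) < |j| → u j = sgnZ j

/-!
The Ritz sets `𝓜_N` increase with `N`, so their minimal energies decrease to their infimum, which
is at least `min_𝓜 𝓔`. Conversely, any `u ∈ 𝓜` of finite energy has `u_N → 1`, and its truncation at
level `N` lies in `𝓜_N` with energy at most `𝓔(u) + 2β(1 - u_N)²`.
-/

noncomputable def trunc (N : ℕ) (u : ℤ → ℝ) : ℤ → ℝ :=
  fun j => if j < -(N : ℤ) then -1 else if (N : ℤ) < j then 1 else u j

section trunc

variable {N : ℕ} {u : ℤ → ℝ} {j : ℤ}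

lemma trunc_of_lt_neg (h : j < -(N : ℤ)) : trunc N u j = -1 := by
  simp [trunc, h]

lemma trunc_of_gt (h : (N : ℤ) < j) : trunc N u j = 1 := by
  simp [trunc, h, show ¬ j < -(N : ℤ) by omega]

lemma trunc_of_mem (h₁ : -(N : ℤ) ≤ j) (h₂ : j ≤ N) : trunc N u j = u j := by
  simp [trunc, not_lt.2 h₁, not_lt.2 h₂]

lemma trunc_mem_Icc (hu : ∀ j, u j ∈ Set.Icc (-1 : ℝ) 1) (j : ℤ) :
    trunc N u j ∈ Set.Icc (-1 : ℝ) 1 := by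
  unfold trunc
  split_ifs
  exacts [by norm_num, by norm_num, hu j]

lemma trunc_neg (hodd : ∀ j, u (-j) = -u j) (j : ℤ) : trunc N u (-j) = -trunc N u j := by
  rcases lt_or_ge j (-(N : ℤ)) with h | h
  · rw [trunc_of_lt_neg h, trunc_of_gt (by omega), neg_neg]
  rcases le_or_gt j (N : ℤ) with h' | h'
  · rw [trunc_of_mem h h', trunc_of_mem (by omega) (by omega), hodd]
  · rw [trunc_of_gt h', trunc_of_lt_neg (by omega)]

lemma trunc_monotone (hmono : Monotone u) (hu : ∀ j, u j ∈ Set.Icc (-1 : ℝ) 1) :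
    Monotone (trunc N u) := by
  intro j k hjk
  rcases lt_or_ge j (-(N : ℤ)) with hj | hj
  · rw [trunc_of_lt_neg hj]; exact (trunc_mem_Icc hu k).1
  rcases lt_or_ge (N : ℤ) k with hk | hk
  · rw [trunc_of_gt hk]; exact (trunc_mem_Icc hu j).2
  rw [trunc_of_mem hj (hjk.trans hk), trunc_of_mem (hj.trans hjk) hk]
  exact hmono hjk

lemma IsM.isMN_trunc (hu : IsM u) : IsMN N (trunc N u) := by
  obtain ⟨hodd, hmono, hbd⟩ := hu
  refine ⟨⟨trunc_neg hodd, trunc_monotone hmono hbd, trunc_mem_Icc hbd⟩, fun j hj => ?_⟩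
  rcases le_or_gt 0 j with h | h
  · rw [abs_of_nonneg h] at hj
    rw [trunc_of_gt hj, sgnZ, if_pos h]
  · rw [abs_of_neg h] at hj
    rw [trunc_of_lt_neg (by omega), sgnZ, if_neg (not_le.2 h)]

lemma tsum_ofReal_comp_trunc_le {F : ℝ → ℝ} (hF1 : F 1 = 0) (hFm1 : F (-1) = 0) :
    ∑' j, ENNReal.ofReal (F (trunc N u j)) ≤ ∑' j, ENNReal.ofReal (F (u j)) := by
  refine ENNReal.tsum_le_tsum fun j => ?_
  unfold trunc
  split_ifs <;> simp [hF1, hFm1]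

/-- Truncation only changes the two jumps across `-N-1, -N` and `N, N+1`, each into `1 - u N`. -/
lemma tsum_sq_sub_trunc_le (hodd : ∀ j, u (-j) = -u j) :
    ∑' j, ENNReal.ofReal ((trunc N u (j + 1) - trunc N u j) ^ 2) ≤
      ∑' j, ENNReal.ofReal ((u (j + 1) - u j) ^ 2) + 2 * ENNReal.ofReal ((1 - u N) ^ 2) := by
  set c := ENNReal.ofReal ((1 - u N) ^ 2)
  have hjump : ∀ j, ENNReal.ofReal ((trunc N u (j + 1) - trunc N u j) ^ 2) ≤
      ENNReal.ofReal ((u (j + 1) - u j) ^ 2) +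
        ((if j = N then c else 0) + (if j = -(N : ℤ) - 1 then c else 0)) := by
    intro j
    rcases lt_trichotomy j (-(N : ℤ) - 1) with h | rfl | h
    · simp [trunc_of_lt_neg (u := u) (show j < -(N : ℤ) by omega),
        trunc_of_lt_neg (u := u) (show j + 1 < -(N : ℤ) by omega)]
    · rw [trunc_of_lt_neg (j := -(N : ℤ) - 1) (by omega), sub_add_cancel,
        trunc_of_mem le_rfl (by omega), hodd, if_neg (by omega), if_pos rfl, neg_sub_neg, zero_add]
      exact le_add_self
    rcases lt_trichotomy j N with h' | rfl | h'
    · rw [trunc_of_mem (by omega) (by omega), trunc_of_mem (by omega) (by omega)]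
      exact le_self_add
    · rw [trunc_of_gt (by omega), trunc_of_mem (by omega) le_rfl, if_pos rfl]
      exact le_add_left le_self_add
    · simp [trunc_of_gt (u := u) h', trunc_of_gt (u := u) (show (N : ℤ) < j + 1 by omega)]
  calc _ ≤ _ := ENNReal.tsum_le_tsum hjump
    _ = _ := by
      rw [ENNReal.tsum_add, ENNReal.tsum_add, tsum_ite_eq, tsum_ite_eq, two_mul]

lemma energy_trunc_le {F : ℝ → ℝ} (β : ℝ) (hF1 : F 1 = 0) (hFm1 : F (-1) = 0)
    (hodd : ∀ j, u (-j) = -u j) :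
    energy F β (trunc N u) ≤
      energy F β u + ENNReal.ofReal β * (2 * ENNReal.ofReal ((1 - u N) ^ 2)) := by
  rw [energy, energy, add_assoc, ← mul_add]
  gcongr ?_ + _ * ?_
  exacts [tsum_ofReal_comp_trunc_le hF1 hFm1, tsum_sq_sub_trunc_le hodd]

end trunc

/-- A finite-energy profile has `F (u n) → 0`; since `u n` increases to a limit in `[0, 1]` and
`F` vanishes there only at `1`, that limit is `1`. -/
lemma IsM.tendsto_one {F : ℝ → ℝ} {β : ℝ} (hFcont : ContinuousOn F (Set.Icc (-1 : ℝ) 1))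
    (hFpos : ∀ η ∈ Set.Ioo (-1 : ℝ) 1, 0 < F η) {u : ℤ → ℝ} (hu : IsM u)
    (hfin : energy F β u ≠ ⊤) :
    Tendsto (fun n : ℕ => u n) atTop (nhds 1) := by
  obtain ⟨hodd, hmono, hbd⟩ := hu
  have hu0 : u 0 = 0 := by linarith [neg_zero (G := ℤ) ▸ hodd 0]
  have hmonoN : Monotone fun n : ℕ => u n := fun a b h => hmono (by exact_mod_cast h)
  have hbdd : BddAbove (Set.range fun n : ℕ => u n) := ⟨1, by rintro _ ⟨n, rfl⟩; exact (hbd n).2⟩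
  set L := ⨆ n : ℕ, u n
  have hlim : Tendsto (fun n : ℕ => u n) atTop (nhds L) := tendsto_atTop_ciSup hmonoN hbdd
  have hL0 : 0 ≤ L := hu0 ▸ le_ciSup hbdd 0
  have hL1 : L ≤ 1 := ciSup_le fun n => (hbd n).2
  have hFL : Tendsto (fun n : ℕ => ENNReal.ofReal (F (u n))) atTop (nhds (ENNReal.ofReal (F L))) :=
    ENNReal.tendsto_ofReal <| (hFcont L ⟨by linarith, hL1⟩).tendsto.comp <|
      tendsto_nhdsWithin_iff.2 ⟨hlim, Eventually.of_forall fun n => hbd n⟩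
  have hF0 : Tendsto (fun n : ℕ => ENNReal.ofReal (F (u n))) atTop (nhds 0) := by
    have hsum := ENNReal.tendsto_cofinite_zero_of_tsum_ne_top
      (f := fun j : ℤ => ENNReal.ofReal (F (u j))) fun h => hfin (by simp [energy, h])
    exact hsum.comp (Nat.cofinite_eq_atTop ▸ Nat.cast_injective.tendsto_cofinite)
  have hFL0 : F L ≤ 0 := ENNReal.ofReal_eq_zero.1 (tendsto_nhds_unique hFL hF0)
  by_contra hne
  exact (hFpos L ⟨by linarith, lt_of_le_of_ne hL1 fun h => hne (h ▸ hlim)⟩).not_ge hFL0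

lemma IsMN.mono {M N : ℕ} {u : ℤ → ℝ} (hu : IsMN M u) (hMN : M ≤ N) : IsMN N u :=
  ⟨hu.1, fun j hj => hu.2 j (lt_of_le_of_lt (by exact_mod_cast hMN) hj)⟩

lemma antitone_iInf_energy_isMN (F : ℝ → ℝ) (β : ℝ) :
    Antitone fun N : ℕ => ⨅ (u : ℤ → ℝ) (_ : IsMN N u), energy F β u :=
  fun _ _ hMN => le_iInf₂ fun u hu => iInf₂_le u (hu.mono hMN)

lemma iInf_iInf_energy_isMN_eq {F : ℝ → ℝ} (β : ℝ)
    (hFcont : ContinuousOn F (Set.Icc (-1 : ℝ) 1)) (hFpos : ∀ η ∈ Set.Ioo (-1 : ℝ) 1, 0 < F η)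
    (hF1 : F 1 = 0) (hFm1 : F (-1) = 0) :
    ⨅ N : ℕ, ⨅ (u : ℤ → ℝ) (_ : IsMN N u), energy F β u =
      ⨅ (u : ℤ → ℝ) (_ : IsM u), energy F β u := by
  refine le_antisymm (le_iInf₂ fun u hu => ?_)
    (le_iInf fun N => le_iInf₂ fun u hu => iInf₂_le u hu.1)
  rcases eq_or_ne (energy F β u) ⊤ with hfin | hfin
  · exact hfin ▸ le_top
  have hdefect : Tendsto (fun N : ℕ => energy F β u +
      ENNReal.ofReal β * (2 * ENNReal.ofReal ((1 - u N) ^ 2))) atTop (nhds (energy F β u)) := by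
    have h := ((hu.tendsto_one hFcont hFpos hfin).const_sub 1).pow 2
    rw [sub_self, zero_pow two_ne_zero] at h
    simpa using (ENNReal.Tendsto.const_mul (ENNReal.Tendsto.const_mul (ENNReal.tendsto_ofReal h)
      (Or.inr ENNReal.ofNat_ne_top)) (Or.inr ENNReal.ofReal_ne_top)).const_add (energy F β u)
  refine ge_of_tendsto' hdefect fun N => ?_
  exact (iInf_le _ N).trans <| (iInf₂_le _ hu.isMN_trunc).trans <|
    energy_trunc_le β hF1 hFm1 hu.1

theorem stmt10_general (F : ℝ → ℝ) (β : ℝ)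
    (hFcont : ContinuousOn F (Set.Icc (-1 : ℝ) 1))
    (hFpos : ∀ η ∈ Set.Ioo (-1 : ℝ) 1, 0 < F η)
    (hF1 : F 1 = 0) (hFm1 : F (-1) = 0) :
    Tendsto (fun N : ℕ => ⨅ (u : ℤ → ℝ) (_ : IsMN N u), energy F β u) atTop
        (nhds (⨅ (u : ℤ → ℝ) (_ : IsM u), energy F β u)) ∧
      Antitone (fun N : ℕ => ⨅ (u : ℤ → ℝ) (_ : IsMN N u), energy F β u) := by
  have hanti := antitone_iInf_energy_isMN F β
  refine ⟨?_, hanti⟩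
  rw [← iInf_iInf_energy_isMN_eq β hFcont hFpos hF1 hFm1]
  exact tendsto_atTop_iInf hanti

/-- convergence and monotonicity of the Ritz minimal energies. -/
theorem stmt10 (F : ℝ → ℝ) (β : ℝ) (hβ : 0 < β)
    (hFcont : ContinuousOn F (Set.Icc (-1 : ℝ) 1))
    (hFnonneg : ∀ η ∈ Set.Icc (-1 : ℝ) 1, 0 ≤ F η)
    (hFpos : ∀ η ∈ Set.Ioo (-1 : ℝ) 1, 0 < F η)
    (hF1 : F 1 = 0) (hFm1 : F (-1) = 0) :
    Tendsto (fun N : ℕ => ⨅ (u : ℤ → ℝ) (_ : IsMN N u), energy F β u) atTop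
        (nhds (⨅ (u : ℤ → ℝ) (_ : IsM u), energy F β u)) ∧
      Antitone (fun N : ℕ => ⨅ (u : ℤ → ℝ) (_ : IsMN N u), energy F β u) :=
  stmt10_general F β hFcont hFpos hF1 hFm1
end
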